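/- arXiv:1209.5959 — 6 statements merged into one kernel-verified Lean document; each statement's English description precedes it below -/
import Mathlib

section
/- The number of parking functions of length n is (n+1)^(n-1). -/
/-!
Pollak's cyclic argument. Read a word of length `n` over `ℤ/(n+1)` and let `ℤ/(n+1)` act by
adding a constant to every letter; every orbit contains exactly one parking function, so
`(n+1) · #PF(n) = (n+1)^n`. With `N j` the number of letters equal to `j mod (n+1)`, the
walk `t ↦ ∑_{j<t} (N j - 1)` drops by exactly one over each period of length `n+1`, and
subtracting `u` from every letter yields a parking function iff the walk stays at or above its
value at `u` during the following period. The drop per period forces these `u` to form a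
single residue class.
-/

open Finset

section Orbits

variable {G X : Type*} [AddGroup G] [AddAction G X]

noncomputable def AddAction.prodEquivOfExistsUnique (p : X → Prop)
    (h : ∀ x, ∃! g : G, p (g +ᵥ x)) : {x // p x} × G ≃ X where
  toFun q := -q.2 +ᵥ (q.1 : X)
  invFun x := (⟨(h x).exists.choose +ᵥ x, (h x).exists.choose_spec⟩, (h x).exists.choose)
  left_inv := by
    rintro ⟨⟨s, hs⟩, g⟩
    have hg : (h (-g +ᵥ s)).exists.choose = g :=
      (h _).unique (h _).exists.choose_spec (by simpa using hs)
    ext <;> simp [hg]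
  right_inv x := by simp

end Orbits

namespace ParkingFunction

variable {n : ℕ}

def IsCyclicMin (f : ℕ → ℤ) (m u : ℕ) : Prop :=
  ∀ s, u < s → s < u + m → f u ≤ f s

section CyclicMin

variable {f : ℕ → ℤ} {m : ℕ}

theorem IsCyclicMin.eq (hf : ∀ t, f (t + m) = f t - 1) {u v : ℕ}
    (hu : IsCyclicMin f m u) (hv : IsCyclicMin f m v) (hum : u < m) (hvm : v < m) :
    u = v := by
  wlog huv : u ≤ v generalizing u v
  · exact (this hv hu hvm hum (by omega)).symm
  by_contra hne
  have h₁ := hu v (by omega) (by omega)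
  have h₂ := hv (u + m) (by omega) (by omega)
  rw [hf] at h₂
  omega

theorem exists_lt_isCyclicMin (hm : 0 < m) (hf : ∀ t, f (t + m) = f t - 1) :
    ∃ r < m, IsCyclicMin f m r := by
  obtain ⟨r₀, hr₀, hmin⟩ := exists_min_image (range m) f (nonempty_range_iff.2 hm.ne')
  have hex : ∃ r, r < m ∧ f r = f r₀ := ⟨r₀, mem_range.1 hr₀, rfl⟩
  obtain ⟨hrm, hr⟩ := Nat.find_spec hex
  -- the first minimiser in a period is strictly below all earlier values
  have hbefore : ∀ s < Nat.find hex, f (Nat.find hex) < f s := fun s hs =>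
    lt_of_le_of_ne (hr.symm ▸ hmin s (mem_range.2 (by omega)))
      fun h => Nat.find_min hex hs ⟨by omega, hr ▸ h.symm⟩
  refine ⟨Nat.find hex, hrm, fun s hrs hsr => ?_⟩
  rcases lt_or_ge s m with hsm | hsm
  · exact hr.symm ▸ hmin s (mem_range.2 hsm)
  · have := hbefore (s - m) (by omega)
    rw [show s = s - m + m by omega, hf]
    omega

theorem existsUnique_isCyclicMin [NeZero m] (hf : ∀ t, f (t + m) = f t - 1) :
    ∃! u : ZMod m, IsCyclicMin f m u.val := by
  obtain ⟨r, hrm, hr⟩ := exists_lt_isCyclicMin (Nat.pos_of_neZero m) hf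
  refine ⟨r, show IsCyclicMin f m (r : ZMod m).val by rwa [ZMod.val_cast_of_lt hrm],
    fun u hu => ?_⟩
  rw [hr.eq hf hu hrm (ZMod.val_lt u), ZMod.natCast_zmod_val]

end CyclicMin

def IsParking (w : Fin n → ZMod (n + 1)) : Prop :=
  ∀ k : Fin n, (k : ℕ) + 1 ≤ #{i | (w i).val ≤ k}

section Walk

variable (w : Fin n → ZMod (n + 1))

def walk (t : ℕ) : ℤ :=
  ∑ j ∈ range t, ((#{i | w i = j} : ℤ) - 1)

theorem card_filter_val_sub_le (u : ℕ) {k : ℕ} (hk : k ≤ n) :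
    #{i | (w i - u).val ≤ k} = ∑ j ∈ Ico u (u + (k + 1)), #{i | w i = j} := by
  rw [sum_Ico_eq_sum_range, add_tsub_cancel_left]
  have : #{i | (w i - u).val ≤ k} = #{i | (w i - u).val ∈ range (k + 1)} := by
    simp only [mem_range, Nat.lt_succ_iff]
  rw [this, ← sum_card_fiberwise_eq_card_filter]
  refine sum_congr rfl fun j hj => congrArg card <| filter_congr fun i _ => ?_
  have hj : j < n + 1 := by simp only [mem_range] at hj; omega
  rw [Nat.cast_add, ← sub_eq_iff_eq_add']
  exact ⟨fun h => h ▸ (ZMod.natCast_zmod_val _).symm, fun h => h ▸ ZMod.val_cast_of_lt hj⟩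

theorem walk_add_sub_walk (u : ℕ) {k : ℕ} (hk : k ≤ n) :
    walk w (u + (k + 1)) - walk w u = #{i | (w i - u).val ≤ k} - (k + 1 : ℤ) := by
  rw [walk, walk, ← sum_Ico_eq_sub _ (by omega), sum_sub_distrib, card_filter_val_sub_le w u hk]
  simp

theorem walk_add_period (t : ℕ) : walk w (t + (n + 1)) = walk w t - 1 := by
  have h := walk_add_sub_walk w t le_rfl
  rw [filter_true_of_mem fun i _ => Nat.lt_succ_iff.1 (ZMod.val_lt _), card_univ,
    Fintype.card_fin] at h
  omega

theorem isParking_sub_iff (u : ℕ) :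
    IsParking (fun i => w i - u) ↔ IsCyclicMin (walk w) (n + 1) u := by
  constructor
  · intro hw s hus hsu
    have h := walk_add_sub_walk w u (k := s - u - 1) (by omega)
    have := hw ⟨s - u - 1, by omega⟩
    rw [show u + (s - u - 1 + 1) = s by omega] at h
    simp only at this
    omega
  · intro hu k
    show (k : ℕ) + 1 ≤ #{i | (w i - u).val ≤ k}
    have h := walk_add_sub_walk w u (k := k) (by omega)
    have := hu (u + (k + 1)) (by omega) (by omega)
    omega

theorem existsUnique_isParking_vadd : ∃! c : ZMod (n + 1), IsParking (c +ᵥ w) := by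
  have key : ∃! u : ZMod (n + 1), IsParking (fun i => w i - u) :=
    (existsUnique_congr fun u => by
        simpa only [ZMod.natCast_zmod_val] using isParking_sub_iff w u.val).2
      (existsUnique_isCyclicMin (walk_add_period w))
  refine (Equiv.neg _).existsUnique_congr (fun u => ?_) |>.1 key
  exact Iff.of_eq (congrArg _ (funext fun i => sub_eq_neg_add (w i) u))

end Walk

theorem IsParking.val_lt {w : Fin n → ZMod (n + 1)} (hw : IsParking w) (i : Fin n) :
    (w i).val < n := by
  have hpos : 0 < n := i.pos
  have h : n - 1 + 1 ≤ #{i | (w i).val ≤ n - 1} := hw ⟨n - 1, by omega⟩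
  have hall : #{i | (w i).val ≤ n - 1} = #(univ : Finset (Fin n)) := by
    refine le_antisymm (card_filter_le _ _) ?_
    rw [card_univ, Fintype.card_fin]
    omega
  have := card_filter_eq_iff.1 hall i (mem_univ i)
  omega

theorem isParking_natCast_iff (a : Fin n → Fin n) :
    IsParking (fun i => ((a i : ℕ) : ZMod (n + 1))) ↔
      ∀ k : Fin n, (k : ℕ) + 1 ≤ #{i | a i ≤ k} := by
  simp only [IsParking, ZMod.val_cast_of_lt (Nat.lt_succ_of_lt (a _).isLt), Fin.le_def]

def parkingEquiv (n : ℕ) :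
    {a : Fin n → Fin n // ∀ k : Fin n, (k : ℕ) + 1 ≤ #{i | a i ≤ k}} ≃
      {w : Fin n → ZMod (n + 1) // IsParking w} where
  toFun a := ⟨fun i => (a.1 i : ℕ), (isParking_natCast_iff a.1).2 a.2⟩
  invFun w := ⟨fun i => ⟨(w.1 i).val, w.2.val_lt i⟩,
    (isParking_natCast_iff _).1 (by simpa only [ZMod.natCast_zmod_val] using w.2)⟩
  left_inv a := by ext i; simp [ZMod.val_cast_of_lt (Nat.lt_succ_of_lt (a.1 i).isLt)]
  right_inv w := by ext i; simp

end ParkingFunction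

open ParkingFunction in
/-- The number of parking functions of length `n` is `(n+1)^(n-1)`.
A word `a` over `{1,…,n}` (0-indexed, with values in `Fin n`) is a parking
function iff for every `k`, at least `k` of its letters are `≤ k` (1-indexed). -/
theorem parking_function_card (n : ℕ) :
    Nat.card {a : Fin n → Fin n //
      ∀ k : Fin n, (k : ℕ) + 1 ≤ (Finset.univ.filter (fun i => a i ≤ k)).card} =
    (n + 1) ^ (n - 1) := by
  have h := Nat.card_congr (AddAction.prodEquivOfExistsUnique IsParking
    (existsUnique_isParking_vadd (n := n)))
  rw [Nat.card_prod, Nat.card_fun, Nat.card_zmod, Nat.card_eq_fintype_card (α := Fin n),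
    Fintype.card_fin, ← Nat.card_congr (parkingEquiv n)] at h
  rcases n with _ | m
  · simp
  · rw [Nat.add_sub_cancel]
    exact Nat.eq_of_mul_eq_mul_right (by positivity) (h.trans (pow_succ _ _))
end

section
/- Every nondecreasing parking function π of length n ≥ 1 can be written uniquely as α ≻ 1 ≺ β, where α and β are (possibly empty) nondecreasing parking functions; here for nondecreasing parking functions α of length k and β, α ≻ β denotes concatenation α · β[k] (β with all letters shifted up by k), and α ≺ β denotes α · β[max(α)−1] (β shifted up by max(α)−1, with max of the empty word taken as 1). Consequently nondecreasing parking functions of length n are in bijection with binary trees with n nodes. -/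
/-- A word is a nondecreasing parking function if it is nondecreasing,
its letters are at least 1 and its `i`-th letter is at most `i` (1-indexed). -/
def IsNDPF (w : List ℕ) : Prop :=
  w.Pairwise (· ≤ ·) ∧ ∀ (i : ℕ) (h : i < w.length), 1 ≤ w[i] ∧ w[i] ≤ i + 1

/-- `w` with `m` added to each letter. -/
def shiftW (m : ℕ) (w : List ℕ) : List ℕ := w.map (· + m)

/-- `α ≻ β = α · β[|α|]`. -/
def opSucc (α β : List ℕ) : List ℕ := α ++ shiftW α.length β

/-- `α ≺ β = α · β[max(α) − 1]`, with the maximum of the empty word taken as 1. -/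
def opPrec (α β : List ℕ) : List ℕ := α ++ shiftW (α.foldr max 1 - 1) β

/-!
Let `graft α β = α · (|α|+1) · β[|α|]`. Since the letters of a nondecreasing parking
function `α` are at most `|α|`, `max (α ≻ 1) = |α| + 1` and `α ≻ 1 ≺ β = graft α β`.
Existence: peel off the last letter `x` of `π = w · x`; either `x = |w| + 1` and `π = graft w []`,
or `x ≤ |w|` and `x` can be appended, shifted down, to the `β` of the decomposition of `w`.
Uniqueness: every letter after the grafting position `k = |α|` is a shifted letter of the
parking function `β`, so at 0-based positions `i > k` it is at most `i`; hence `k` is the last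
position with `π[i] = i + 1`. Grafting is the node constructor of a bijection from binary trees.
-/

theorem List.foldr_max_eq_of_forall_le {α : Type*} [LinearOrder α] {l : List α} {b : α}
    (h : ∀ x ∈ l, x ≤ b) : l.foldr max b = b := by
  induction l with
  | nil => rfl
  | cons a l ih =>
    rw [List.forall_mem_cons] at h
    rw [List.foldr_cons, ih h.2, max_eq_right h.1]

theorem isNDPF_nil : IsNDPF [] :=
  ⟨List.Pairwise.nil, fun _ h => absurd h (Nat.not_lt_zero _)⟩

theorem isNDPF_append_singleton {w : List ℕ} {x : ℕ} :
    IsNDPF (w ++ [x]) ↔ IsNDPF w ∧ (∀ y ∈ w, y ≤ x) ∧ 1 ≤ x ∧ x ≤ w.length + 1 := by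
  simp only [IsNDPF, List.pairwise_append, List.pairwise_singleton, List.mem_singleton,
    forall_eq, true_and, List.length_append, List.length_singleton]
  constructor
  · rintro ⟨⟨hsort, hle⟩, hbound⟩
    refine ⟨⟨hsort, fun i hi => ?_⟩, hle, hbound w.length (by omega) |>.imp ?_ ?_⟩
    · simpa [List.getElem_append_left hi] using hbound i (by omega)
    all_goals simp
  · rintro ⟨⟨hsort, hbound⟩, hle, hx⟩
    refine ⟨⟨hsort, hle⟩, fun i hi => ?_⟩
    rcases Nat.lt_or_ge i w.length with hi' | hi'
    · simpa [List.getElem_append_left hi'] using hbound i hi'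
    · obtain rfl : i = w.length := by omega
      simpa using hx

theorem IsNDPF.le_length {w : List ℕ} (h : IsNDPF w) {x : ℕ} (hx : x ∈ w) : x ≤ w.length := by
  obtain ⟨i, hi, rfl⟩ := List.mem_iff_getElem.mp hx
  have := (h.2 i hi).2
  omega

theorem IsNDPF.le_of_getElem?_eq {w : List ℕ} (h : IsNDPF w) {i x : ℕ} (hx : w[i]? = some x) :
    x ≤ i + 1 := by
  obtain ⟨hi, rfl⟩ := List.getElem?_eq_some_iff.mp hx
  exact (h.2 i hi).2

def graft (α β : List ℕ) : List ℕ := α ++ (α.length + 1) :: shiftW α.length β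

theorem length_graft (α β : List ℕ) : (graft α β).length = α.length + β.length + 1 := by
  simp [graft, shiftW]; omega

theorem graft_append_singleton (α β : List ℕ) (y : ℕ) :
    graft α (β ++ [y]) = graft α β ++ [y + α.length] := by
  simp [graft, shiftW]

theorem opPrec_opSucc_eq_graft {α : List ℕ} (hα : IsNDPF α) (β : List ℕ) :
    opPrec (opSucc α [1]) β = graft α β := by
  have hmax : (α ++ [α.length + 1]).foldr max 1 = α.length + 1 := by
    rw [List.foldr_append, List.foldr_cons, List.foldr_nil, max_eq_left (by omega)]
    exact List.foldr_max_eq_of_forall_le fun x hx => (hα.le_length hx).trans (Nat.le_succ _)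
  simp [opPrec, opSucc, graft, shiftW, hmax, Nat.add_comm]

theorem isNDPF_graft {α β : List ℕ} (hα : IsNDPF α) (hβ : IsNDPF β) : IsNDPF (graft α β) := by
  induction β using List.reverseRecOn with
  | nil =>
    exact isNDPF_append_singleton.mpr
      ⟨hα, fun y hy => (hα.le_length hy).trans (Nat.le_succ _), by omega, le_rfl⟩
  | append_singleton β y ih =>
    obtain ⟨hβ, hle, hy1, hy⟩ := isNDPF_append_singleton.mp hβ
    rw [graft_append_singleton]
    refine isNDPF_append_singleton.mpr ⟨ih hβ, fun x hx => ?_, by omega, ?_⟩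
    · simp only [graft, shiftW, List.mem_append, List.mem_cons, List.mem_map] at hx
      rcases hx with hx | rfl | ⟨z, hz, rfl⟩
      · have := hα.le_length hx
        omega
      · omega
      · have := hle z hz
        omega
    · rw [length_graft]
      omega

theorem exists_graft_eq {π : List ℕ} (hπ : IsNDPF π) (hne : π ≠ []) :
    ∃ α β, IsNDPF α ∧ IsNDPF β ∧ graft α β = π := by
  induction π using List.reverseRecOn with
  | nil => exact absurd rfl hne
  | append_singleton w x ih =>
    obtain ⟨hw, hle, hx1, hx⟩ := isNDPF_append_singleton.mp hπ
    rcases Nat.lt_or_ge x (w.length + 1) with hx' | hx'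
    · obtain ⟨α, β, hα, hβ, rfl⟩ := ih hw (List.ne_nil_of_length_pos (by omega))
      have hrec : α.length + 1 ≤ x := hle _ (by simp [graft])
      have hshift : ∀ y ∈ β, y + α.length ≤ x := fun y hy => hle _ (by simp [graft, shiftW, hy])
      rw [length_graft] at hx'
      refine ⟨α, β ++ [x - α.length], hα,
        isNDPF_append_singleton.mpr ⟨hβ, fun y hy => ?_, by omega, by omega⟩, ?_⟩
      · have := hshift y hy
        omega
      · rw [graft_append_singleton, Nat.sub_add_cancel (by omega)]
    · exact ⟨w, [], hw, isNDPF_nil, by simp [graft, shiftW]; omega⟩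

theorem getElem?_graft_length (α β : List ℕ) : (graft α β)[α.length]? = some (α.length + 1) := by
  simp [graft]

theorem getElem?_graft_ne_of_length_lt {α β : List ℕ} (hβ : IsNDPF β) {i : ℕ}
    (hi : α.length < i) : (graft α β)[i]? ≠ some (i + 1) := by
  obtain ⟨j, rfl⟩ : ∃ j, i = α.length + 1 + j := ⟨i - α.length - 1, by omega⟩
  rw [graft, List.getElem?_append_right (by omega), Nat.add_assoc, Nat.add_sub_cancel_left,
    Nat.add_comm 1 j, List.getElem?_cons_succ, shiftW, List.getElem?_map]
  cases hj : β[j]? with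
  | none => simp
  | some y =>
    have := hβ.le_of_getElem?_eq hj
    simp only [Option.map_some, ne_eq, Option.some.injEq]
    omega

theorem length_eq_of_graft_eq {α β α' β' : List ℕ} (hβ : IsNDPF β) (hβ' : IsNDPF β')
    (h : graft α β = graft α' β') : α.length = α'.length := by
  by_contra hne
  rcases Nat.lt_or_gt_of_ne hne with hlt | hlt
  · exact getElem?_graft_ne_of_length_lt hβ hlt (h ▸ getElem?_graft_length α' β')
  · exact getElem?_graft_ne_of_length_lt hβ' hlt (h ▸ getElem?_graft_length α β)

theorem graft_injective {α β α' β' : List ℕ} (hβ : IsNDPF β) (hβ' : IsNDPF β')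
    (h : graft α β = graft α' β') : α = α' ∧ β = β' := by
  have hlen := length_eq_of_graft_eq hβ hβ' h
  obtain ⟨rfl, htail⟩ := List.append_inj h hlen
  refine ⟨rfl, List.map_injective_iff.mpr (add_left_injective α.length) ?_⟩
  simpa [shiftW] using htail

def ndpfOfTree : BinaryTree Unit → List ℕ
  | .nil => []
  | .node _ l r => graft (ndpfOfTree l) (ndpfOfTree r)

theorem isNDPF_ndpfOfTree : ∀ t : BinaryTree Unit, IsNDPF (ndpfOfTree t)
  | .nil => isNDPF_nil
  | .node _ l r => isNDPF_graft (isNDPF_ndpfOfTree l) (isNDPF_ndpfOfTree r)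

theorem length_ndpfOfTree : ∀ t : BinaryTree Unit, (ndpfOfTree t).length = t.numNodes
  | .nil => rfl
  | .node _ l r => by
    rw [ndpfOfTree, length_graft, length_ndpfOfTree l, length_ndpfOfTree r, BinaryTree.numNodes]

theorem ndpfOfTree_injective : Function.Injective ndpfOfTree
  | .nil, .nil, _ => rfl
  | .nil, .node _ _ _, h => absurd h (by simp [ndpfOfTree, graft])
  | .node _ _ _, .nil, h => absurd h (by simp [ndpfOfTree, graft])
  | .node _ l r, .node _ l' r', h => by
    obtain ⟨hl, hr⟩ := graft_injective (isNDPF_ndpfOfTree r) (isNDPF_ndpfOfTree r') h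
    rw [ndpfOfTree_injective hl, ndpfOfTree_injective hr]

theorem exists_ndpfOfTree_eq {π : List ℕ} (hπ : IsNDPF π) : ∃ t, ndpfOfTree t = π := by
  by_cases hne : π = []
  · exact ⟨.nil, hne.symm⟩
  obtain ⟨α, β, hα, hβ, hgraft⟩ := exists_graft_eq hπ hne
  have hlen : π.length = α.length + β.length + 1 := hgraft ▸ length_graft α β
  obtain ⟨l, rfl⟩ := exists_ndpfOfTree_eq hα
  obtain ⟨r, rfl⟩ := exists_ndpfOfTree_eq hβ
  exact ⟨.node () l r, hgraft⟩
termination_by π.length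

noncomputable def ndpfEquivBinaryTree (n : ℕ) :
    {w : List ℕ // IsNDPF w ∧ w.length = n} ≃ {t : BinaryTree Unit // t.numNodes = n} :=
  .symm <| .ofBijective
    (fun t => ⟨ndpfOfTree t, isNDPF_ndpfOfTree t, (length_ndpfOfTree t).trans t.2⟩)
    ⟨fun _ _ h => Subtype.ext (ndpfOfTree_injective (congrArg Subtype.val h)),
     fun ⟨π, hπ, hlen⟩ => by
      obtain ⟨t, rfl⟩ := exists_ndpfOfTree_eq hπ
      exact ⟨⟨t, (length_ndpfOfTree t).symm.trans hlen⟩, rfl⟩⟩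

/-- Every nondecreasing parking function `π` of length `n ≥ 1` factors uniquely as
`α ≻ 1 ≺ β` with `α`, `β` (possibly empty) nondecreasing parking functions;
consequently nondecreasing parking functions of length `n` are in bijection with
binary trees with `n` nodes. -/
theorem ndpf_duplicial_decomposition (n : ℕ) (hn : 1 ≤ n) :
    (∀ π : List ℕ, IsNDPF π → π.length = n →
      ∃! p : List ℕ × List ℕ, IsNDPF p.1 ∧ IsNDPF p.2 ∧
        π = opPrec (opSucc p.1 [1]) p.2) ∧
    Nonempty ({w : List ℕ // IsNDPF w ∧ w.length = n} ≃
      {t : Tree Unit // t.numNodes = n}) := by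
  refine ⟨fun π hπ hlen => ?_, ⟨ndpfEquivBinaryTree n⟩⟩
  obtain ⟨α, β, hα, hβ, rfl⟩ := exists_graft_eq hπ (List.ne_nil_of_length_pos (by omega))
  refine ⟨(α, β), ⟨hα, hβ, (opPrec_opSucc_eq_graft hα β).symm⟩, ?_⟩
  rintro ⟨α', β'⟩ ⟨hα', hβ', h⟩
  rw [opPrec_opSucc_eq_graft hα'] at h
  obtain ⟨rfl, rfl⟩ := graft_injective hβ hβ' h
  rfl
end

section
/- In a duplicial algebra (V, ≺, ≻), the operation {x,y} := x ≺ y − x ≻ y preserves the space of primitive elements of any duplicial bialgebra structure, i.e., if δ(x) = 0 and δ(y) = 0 then δ({x,y}) = 0, where δ satisfies δ(x*y) = x⊗y + Σ x₍₁₎⊗(x₍₂₎*y) + Σ (x*y₍₁₎)⊗y₍₂₎ for * ∈ {≺,≻}. -/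
open scoped TensorProduct

/-- In a duplicial bialgebra `(V, ≺, ≻, δ)`, the magmatic operation
`{x,y} = x ≺ y − x ≻ y` preserves primitive elements. Here
`p` is `≺`, `s` is `≻`, both associative bilinear operations satisfying the
duplicial relation, and `δ` satisfies the duplicial bialgebra compatibility
`δ(x*y) = x⊗y + (id ⊗ (·*y))(δx) + ((x*·) ⊗ id)(δy)` for `* ∈ {≺, ≻}`. -/
theorem duplicial_bracket_preserves_primitives
    (R V : Type*) [CommRing R] [AddCommGroup V] [Module R V]
    (p s : V →ₗ[R] V →ₗ[R] V) (δ : V →ₗ[R] V ⊗[R] V)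
    (hp : ∀ x y z : V, p (p x y) z = p x (p y z))
    (hs : ∀ x y z : V, s (s x y) z = s x (s y z))
    (hdup : ∀ x y z : V, p (s x y) z = s x (p y z))
    (hδp : ∀ x y : V, δ (p x y) =
      x ⊗ₜ[R] y + (LinearMap.lTensor V (p.flip y)) (δ x) +
        (LinearMap.rTensor V (p x)) (δ y))
    (hδs : ∀ x y : V, δ (s x y) =
      x ⊗ₜ[R] y + (LinearMap.lTensor V (s.flip y)) (δ x) +
        (LinearMap.rTensor V (s x)) (δ y))
    (x y : V) (hx : δ x = 0) (hy : δ y = 0) :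
    δ (p x y - s x y) = 0 := by
  simp [hδp, hδs, hx, hy]
end

section
/- The coefficients gₙ of the unique formal power series solution g = Σₙ gₙzⁿ in the free associative algebra on S₁, S₂, ... (graded with deg Sᵢ = i) of the equation g = Σ_{n≥0} Sₙ gⁿ (with S₀ = 1) satisfy gₙ = Σ_{π ∈ NDPFₙ} S^{t(π)}, where t(π) is the packed evaluation of π (the composition of n obtained by removing zeros from the multiplicity sequence of π). -/
/-!
Record a nondecreasing parking function of length `n` by the multiplicities `(c₀, …, cₙ)` of its
values. These vectors are exactly the Łukasiewicz words (preorder degree sequences) of plane trees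
with `n + 1` vertices, and the packed evaluation is the word `S_{c₀} ⋯ S_{cₙ}` with `S₀ = 1`.
Let `g = ∑ Fₙ zⁿ`. Removing the root of the first tree of a forest of `k + 1` trees leaves a forest
of `a + k` trees, where `a` is the root degree; the equation `g = ∑ Sₐ zᵃ gᵃ` gives the same
recursion `[zᵐ] g^(k+1) = ∑ₐ Sₐ [z^(m-a)] g^(a+k)`. Hence the weighted count of forests of `k`
trees with `m` edges is `[zᵐ] gᵏ`, and `k = 1` is the theorem.
-/

open Finset PowerSeries

namespace Finset.Nat

theorem sum_antidiagonalTuple_succ {M : Type*} [AddCommMonoid M] (k n : ℕ)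
    (f : (Fin (k + 1) → ℕ) → M) :
    ∑ c ∈ antidiagonalTuple (k + 1) n, f c =
      ∑ p ∈ antidiagonal n, ∑ c ∈ antidiagonalTuple k p.2, f (Fin.cons p.1 c) := by
  rw [sum_sigma']
  refine sum_nbij' (fun c => ⟨(c 0, n - c 0), Fin.tail c⟩) (fun x => Fin.cons x.1.1 x.2)
    ?_ ?_ ?_ ?_ ?_ <;> simp +contextual [mem_antidiagonalTuple, Fin.sum_univ_succ, Fin.tail]
  · omega
  · rintro ⟨⟨a, b⟩, c⟩ rfl -
    simp

theorem sum_antidiagonal_sum_antidiagonal_fst {M : Type*} [AddCommMonoid M] (n : ℕ)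
    (f : ℕ → ℕ → ℕ → M) :
    ∑ p ∈ antidiagonal n, ∑ q ∈ antidiagonal p.1, f q.1 q.2 p.2 =
      ∑ p ∈ antidiagonal n, ∑ q ∈ antidiagonal p.2, f p.1 q.1 q.2 := by
  rw [sum_sigma', sum_sigma']
  refine sum_nbij' (fun x => ⟨(x.2.1, x.2.2 + x.1.2), (x.2.2, x.1.2)⟩)
    (fun x => ⟨(x.1.1 + x.2.1, x.2.2), (x.1.1, x.2.1)⟩) ?_ ?_ ?_ ?_ ?_ <;>
    rintro ⟨⟨a, b⟩, c, d⟩ <;> simp +contextual <;> omega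

end Finset.Nat

theorem Fin.card_filter_eq_count_ofFn {α : Type*} [DecidableEq α] {n : ℕ} (f : Fin n → α)
    (a : α) : #{j | f j = a} = (List.ofFn f).count a := by
  rw [← Multiset.coe_count, ← Fin.univ_val_map, Multiset.count_map, card_def, filter_val]
  simp only [eq_comm]

namespace PowerSeries

variable {A : Type*} [Semiring A]

theorem coeff_pow_eq_sum_antidiagonalTuple (g : A⟦X⟧) (k m : ℕ) :
    coeff m (g ^ k) =
      ∑ c ∈ Finset.Nat.antidiagonalTuple k m, (List.ofFn fun i => coeff (c i) g).prod := by
  induction k generalizing m with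
  | zero => cases m <;> simp [coeff_one]
  | succ k ih =>
    simp only [pow_succ', coeff_mul, ih, mul_sum, Finset.Nat.sum_antidiagonalTuple_succ,
      List.ofFn_succ, List.prod_cons, Fin.cons_zero, Fin.cons_succ]

/-- `hg` is the equation `g = ∑ₙ sₙ zⁿ gⁿ`, read coefficientwise. -/
theorem coeff_pow_succ_eq_sum_of_coeff_eq {s : ℕ → A} {g : A⟦X⟧}
    (hg : ∀ n, coeff n g = ∑ p ∈ antidiagonal n, s p.1 * coeff p.2 (g ^ p.1)) (k m : ℕ) :
    coeff m (g ^ (k + 1)) = ∑ p ∈ antidiagonal m, s p.1 * coeff p.2 (g ^ (p.1 + k)) := by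
  simp_rw [pow_succ', coeff_mul, hg, sum_mul, mul_assoc,
    Finset.Nat.sum_antidiagonal_sum_antidiagonal_fst m fun a b y =>
      s a * (coeff b (g ^ a) * coeff y (g ^ k)), ← mul_sum, ← coeff_mul, pow_add]

end PowerSeries

section Lukasiewicz

/-- `L` is the preorder sequence of vertex degrees of a forest of `k` plane trees. -/
def IsLukasiewicz (k : ℕ) (L : List ℕ) : Prop :=
  (∀ j < L.length, j < k + (L.take j).sum) ∧ L.length = k + L.sum

instance (k : ℕ) : DecidablePred (IsLukasiewicz k) := fun L => by
  unfold IsLukasiewicz; infer_instance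

theorem not_isLukasiewicz_zero_cons (a : ℕ) (L : List ℕ) : ¬ IsLukasiewicz 0 (a :: L) :=
  fun h => (h.1 0 (by simp)).ne rfl

theorem isLukasiewicz_succ_cons (k a : ℕ) (L : List ℕ) :
    IsLukasiewicz (k + 1) (a :: L) ↔ IsLukasiewicz (k + a) L := by
  simp only [IsLukasiewicz, List.length_cons, List.sum_cons, Nat.forall_lt_succ_left,
    List.take_succ_cons, List.take_zero, List.sum_nil]
  constructor
  · rintro ⟨⟨-, h⟩, hl⟩
    exact ⟨fun j hj => by have := h j hj; omega, by omega⟩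
  · rintro ⟨h, hl⟩
    exact ⟨⟨by omega, fun j hj => by have := h j hj; omega⟩, by omega⟩

variable {A : Type*} [Semiring A]

/-- The forests of `k` plane trees with `m` edges, each weighted by the product of `s` over its
vertex degrees. -/
def lukasiewiczSum (s : ℕ → A) (k m : ℕ) : A :=
  ∑ c ∈ Finset.Nat.antidiagonalTuple (m + k) m with IsLukasiewicz k (List.ofFn c),
    ((List.ofFn c).map s).prod

theorem lukasiewiczSum_zero_left (s : ℕ → A) (m : ℕ) :
    lukasiewiczSum s 0 m = if m = 0 then 1 else 0 := by
  rcases m with _ | m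
  · simp [lukasiewiczSum, IsLukasiewicz]
  · rw [lukasiewiczSum, filter_false_of_mem fun c _ => by
      rw [List.ofFn_succ]; exact not_isLukasiewicz_zero_cons _ _]
    simp

theorem lukasiewiczSum_succ_left (s : ℕ → A) (k m : ℕ) :
    lukasiewiczSum s (k + 1) m =
      ∑ p ∈ antidiagonal m, s p.1 * lukasiewiczSum s (k + p.1) p.2 := by
  rw [lukasiewiczSum, ← Nat.add_assoc, sum_filter, Finset.Nat.sum_antidiagonalTuple_succ]
  refine sum_congr rfl fun ⟨a, b⟩ hab => ?_
  obtain rfl : a + b = m := mem_antidiagonal.1 hab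
  rw [lukasiewiczSum, show a + b + k = b + (k + a) by omega, sum_filter, mul_sum]
  refine sum_congr rfl fun c _ => ?_
  simp [List.ofFn_succ, isLukasiewicz_succ_cons, mul_ite]

theorem lukasiewiczSum_eq_coeff_pow {s : ℕ → A} {g : A⟦X⟧}
    (hg : ∀ n, coeff n g = ∑ p ∈ antidiagonal n, s p.1 * coeff p.2 (g ^ p.1)) (k m : ℕ) :
    lukasiewiczSum s k m = coeff m (g ^ k) := by
  induction m using Nat.strong_induction_on generalizing k with
  | _ m ihm =>
    induction k with
    | zero => rw [lukasiewiczSum_zero_left, pow_zero, coeff_one]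
    | succ k ihk =>
      rw [lukasiewiczSum_succ_left, coeff_pow_succ_eq_sum_of_coeff_eq hg]
      refine sum_congr rfl fun ⟨a, b⟩ hab => ?_
      obtain rfl : a + b = m := mem_antidiagonal.1 hab
      rw [add_comm a k]
      rcases a.eq_zero_or_pos with rfl | ha
      · simp only [add_zero, zero_add] at ihk ⊢
        rw [ihk]
      · rw [ihm b (by omega)]

end Lukasiewicz

namespace NoncommLagrange

def nondecParkingFunctions (n : ℕ) : Finset (Fin n → Fin n) :=
  {π | (∀ i j : Fin n, i ≤ j → π i ≤ π j) ∧ ∀ i : Fin n, (π i : ℕ) ≤ (i : ℕ)}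

/-- Indexed by `Fin (n + 1)`, hence ending in a zero, because the Łukasiewicz word of a tree with
`n + 1` vertices has `n + 1` letters. -/
def valueCount {n : ℕ} (π : Fin n → Fin n) : Fin (n + 1) → ℕ := fun i => #{j | (π j : ℕ) = i}

theorem sum_take_valueCount {n : ℕ} (π : Fin n → Fin n) {a : ℕ} (ha : a ≤ n + 1) :
    ((List.ofFn (valueCount π)).take a).sum = #{j | (π j : ℕ) < a} := by
  induction a with
  | zero => simp
  | succ a ih =>
    rw [List.sum_take_succ _ _ (by simpa using ha), ih (by omega), List.getElem_ofFn,
      valueCount, card_filter, card_filter, card_filter, ← sum_add_distrib]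
    refine sum_congr rfl fun j _ => ?_
    dsimp only
    split_ifs <;> omega

theorem sum_valueCount {n : ℕ} (π : Fin n → Fin n) : ∑ i, valueCount π i = n := by
  have := sum_take_valueCount π le_rfl
  rw [List.take_of_length_le (by simp), List.sum_ofFn] at this
  rw [this, filter_true_of_mem fun j _ => by omega, card_univ, Fintype.card_fin]

theorem apply_le_iff_lt_sum_take_valueCount {n : ℕ} {π : Fin n → Fin n} (hπ : Monotone π)
    (j a : Fin n) : π j ≤ a ↔ (j : ℕ) < ((List.ofFn (valueCount π)).take ((a : ℕ) + 1)).sum := by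
  rw [sum_take_valueCount π (by omega), ← Tuple.lt_card_le_iff_apply_le_of_monotone hπ]
  simp only [Nat.lt_succ_iff, Fin.le_def]

theorem isLukasiewicz_valueCount_iff {n : ℕ} {π : Fin n → Fin n} (hπ : Monotone π) :
    IsLukasiewicz 1 (List.ofFn (valueCount π)) ↔ ∀ j, π j ≤ j := by
  have hsum : (List.ofFn (valueCount π)).sum = n := by rw [List.sum_ofFn, sum_valueCount]
  simp only [IsLukasiewicz, List.length_ofFn, hsum, Nat.forall_lt_succ_left]
  constructor
  · rintro ⟨⟨-, h⟩, -⟩ j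
    rw [apply_le_iff_lt_sum_take_valueCount hπ]
    have := h j j.2
    omega
  · intro h
    refine ⟨⟨by omega, fun m hm => ?_⟩, by omega⟩
    have := (apply_le_iff_lt_sum_take_valueCount hπ ⟨m, hm⟩ ⟨m, hm⟩).1 (h _)
    simp only at this
    omega

theorem valueCount_injOn {n : ℕ} : Set.InjOn (valueCount (n := n)) {π | Monotone π} := by
  intro π hπ π' hπ' h
  have key : ∀ j a, π j ≤ a ↔ π' j ≤ a := fun j a => by
    rw [apply_le_iff_lt_sum_take_valueCount hπ, apply_le_iff_lt_sum_take_valueCount hπ', h]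
  funext j
  exact le_antisymm ((key j (π' j)).2 le_rfl) ((key j (π j)).1 le_rfl)

theorem exists_monotone_valueCount_eq {n : ℕ} {c : Fin (n + 1) → ℕ} (hc : ∑ i, c i = n)
    (hlast : c (Fin.last n) = 0) : ∃ π : Fin n → Fin n, Monotone π ∧ valueCount π = c := by
  set M : Multiset ℕ := ∑ i, c i • {(i : ℕ)}
  set l := M.sort (· ≤ ·)
  have hlen : l.length = n := by simp [l, M, hc]
  have hlt : ∀ x ∈ l, x < n := by
    intro x hx
    simp only [l, M, Multiset.mem_sort, Multiset.mem_sum, mem_univ, true_and,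
      Multiset.mem_nsmul, Multiset.mem_singleton] at hx
    obtain ⟨i, hi, rfl⟩ := hx
    exact Fin.val_lt_last fun h => hi (h ▸ hlast)
  obtain ⟨f, hf⟩ : ∃ f : Fin n → ℕ, List.ofFn f = l :=
    ⟨fun j => l[j.1], List.ext_getElem (by simp [hlen]) fun _ _ _ => by simp⟩
  have hmono : Monotone f :=
    List.sortedLE_ofFn_iff.1 (hf ▸ (Multiset.pairwise_sort M (· ≤ ·)).sortedLE)
  refine ⟨fun j => ⟨f j, hlt _ (hf ▸ List.mem_ofFn.2 ⟨j, rfl⟩)⟩, fun i j h => hmono h, ?_⟩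
  funext i
  change #{j | f j = (i : ℕ)} = c i
  rw [Fin.card_filter_eq_count_ofFn, hf, ← Multiset.coe_count, Multiset.sort_eq]
  simp [M, Multiset.count_sum', Multiset.count_singleton, Fin.val_inj]

theorem last_eq_zero_of_isLukasiewicz_one {n : ℕ} {c : Fin (n + 1) → ℕ} (hc : ∑ i, c i = n)
    (hluk : IsLukasiewicz 1 (List.ofFn c)) : c (Fin.last n) = 0 := by
  have hn := hluk.1 n (by simp)
  have htake := List.sum_take_succ (List.ofFn c) n (by simp)
  rw [List.take_of_length_le (by simp), List.sum_ofFn, hc, List.getElem_ofFn] at htake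
  simp only [Fin.last] at htake ⊢
  omega

theorem sum_nondecParkingFunctions_valueCount {M : Type*} [AddCommMonoid M] (n : ℕ)
    (w : (Fin (n + 1) → ℕ) → M) :
    ∑ π ∈ nondecParkingFunctions n, w (valueCount π) =
      ∑ c ∈ Finset.Nat.antidiagonalTuple (n + 1) n with IsLukasiewicz 1 (List.ofFn c), w c := by
  refine sum_nbij valueCount (fun π hπ => ?_) (valueCount_injOn.mono fun π hπ => ?_)
    (fun c hc => ?_) fun _ _ => rfl
  · obtain ⟨hmono, hpark⟩ := (mem_filter.1 hπ).2
    exact mem_filter.2 ⟨Finset.Nat.mem_antidiagonalTuple.2 (sum_valueCount π),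
      (isLukasiewicz_valueCount_iff fun i j h => hmono i j h).2 hpark⟩
  · exact fun i j h => (mem_filter.1 hπ).2.1 i j h
  · obtain ⟨hsum, hluk⟩ := mem_filter.1 hc
    rw [Finset.Nat.mem_antidiagonalTuple] at hsum
    obtain ⟨π, hmono, rfl⟩ :=
      exists_monotone_valueCount_eq hsum (last_eq_zero_of_isLukasiewicz_one hsum hluk)
    exact ⟨π, mem_filter.2 ⟨mem_univ _, fun i j h => hmono h,
      (isLukasiewicz_valueCount_iff hmono).1 hluk⟩, rfl⟩

def S (k : ℕ) : FreeAlgebra ℚ ℕ := if k = 0 then 1 else FreeAlgebra.ι ℚ k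

theorem prod_map_ι_filter_ne_zero (L : List ℕ) :
    ((L.filter (· != 0)).map (FreeAlgebra.ι ℚ)).prod = (L.map S).prod := by
  induction L with
  | nil => rfl
  | cons a L ih => by_cases ha : a = 0 <;> simp [S, ha, ih]

theorem ofFn_valueCount {n : ℕ} (π : Fin n → Fin n) :
    List.ofFn (valueCount π) = List.ofFn (fun i => #{j | π j = i}) ++ [0] := by
  rw [List.ofFn_succ', List.concat_eq_append]
  congr 3
  · funext i
    simp [valueCount, Fin.val_inj]
  · exact card_eq_zero.2 (filter_false_of_mem fun j _ => (π j).isLt.ne)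

theorem coeff_mk_eq_sum_of_rec {F : ℕ → FreeAlgebra ℚ ℕ} (h0 : F 0 = 1)
    (hrec : ∀ n, 1 ≤ n → F n =
      ∑ k ∈ Icc 1 n, ∑ c ∈ Finset.Nat.antidiagonalTuple k (n - k),
        FreeAlgebra.ι ℚ k * (List.ofFn fun i : Fin k => F (c i)).prod) (m : ℕ) :
    coeff m (mk F) = ∑ p ∈ antidiagonal m, S p.1 * coeff p.2 (mk F ^ p.1) := by
  rcases m.eq_zero_or_pos with rfl | hm
  · simp [h0, S]
  rw [coeff_mk, hrec m hm, Finset.Nat.sum_antidiagonal_eq_sum_range_succ_mk, range_eq_Ico,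
    Nat.succ_eq_add_one, Ico_add_one_right_eq_Icc, ← insert_Icc_add_one_left_eq_Icc m.zero_le,
    sum_insert (by simp)]
  simp only [pow_zero, coeff_one, Nat.sub_zero, hm.ne', if_false, mul_zero, zero_add,
    coeff_pow_eq_sum_antidiagonalTuple, coeff_mk, mul_sum]
  refine sum_congr rfl fun k hk => ?_
  rw [S, if_neg (by simp at hk; omega)]

end NoncommLagrange

open NoncommLagrange

/-- Noncommutative Lagrange inversion: if `F n` is the degree-`n` component of
the unique solution of `g = ∑_{n≥0} Sₙ gⁿ` (with `S₀ = 1`) in the free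
associative algebra on `S₁, S₂, …` (degreewise recursion `F 0 = 1`,
`F n = ∑_{k=1}^n S_k ∑_{n₁+⋯+n_k = n-k} F n₁ ⋯ F n_k`), then
`F n = ∑_{π ∈ NDPFₙ} S^{t(π)}` where `t(π)` is the packed evaluation of `π`
(the nonzero letter multiplicities of `π`, in order). -/
theorem noncommutative_lagrange (F : ℕ → FreeAlgebra ℚ ℕ)
    (h0 : F 0 = 1)
    (hrec : ∀ n, 1 ≤ n → F n =
      ∑ k ∈ Finset.Icc 1 n, ∑ c ∈ Finset.Nat.antidiagonalTuple k (n - k),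
        FreeAlgebra.ι ℚ k * (List.ofFn fun i : Fin k => F (c i)).prod)
    (n : ℕ) :
    F n = ∑ π ∈ Finset.univ.filter
        (fun π : Fin n → Fin n =>
          (∀ i j : Fin n, i ≤ j → π i ≤ π j) ∧ ∀ i : Fin n, (π i : ℕ) ≤ (i : ℕ)),
      ((((List.ofFn fun i : Fin n =>
            (Finset.univ.filter (fun j => π j = i)).card).filter
          (fun e => e != 0)).map (FreeAlgebra.ι ℚ)).prod) := by
  calc F n = coeff n (mk F ^ 1) := by rw [pow_one, coeff_mk]
    _ = lukasiewiczSum S 1 n :=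
      (lukasiewiczSum_eq_coeff_pow (coeff_mk_eq_sum_of_rec h0 hrec) 1 n).symm
    _ = ∑ π ∈ nondecParkingFunctions n, ((List.ofFn (valueCount π)).map S).prod :=
      (sum_nondecParkingFunctions_valueCount n _).symm
    _ = _ := sum_congr rfl fun π _ => by
      rw [prod_map_ι_filter_ne_zero, ofFn_valueCount, List.map_append, List.prod_append]
      simp [S]
end

section
/- The number of parking quasi-ribbons of length n equals the little Schröder number sₙ; in particular there are 1, 3, 11 parking quasi-ribbons of lengths 1, 2, 3. -/
/-- A parking quasi-ribbon of length `n`: a nondecreasing parking function of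
length `n` together with a set of bar positions (a bar after position `b`,
0-indexed), where bars may only occur between consecutive letters `a|b` with
`a < b`. -/
def IsPQR (n : ℕ) (p : List ℕ × Finset ℕ) : Prop :=
  IsNDPF p.1 ∧ p.1.length = n ∧
    ∀ b ∈ p.2, b + 1 < n ∧ p.1.getD b 0 < p.1.getD (b + 1) 0

/-!
A nondecreasing parking function `w` of length `m + 1` starts with `1`. Cutting it at its first
return to the diagonal, the least `k` with `k = m` or `w (k + 1) = k + 2`, writes it uniquely as
the arch `1 u (v + k + 1)`, where `u` and `v` are nondecreasing parking functions of lengths `k`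
and `m - k`. The bars of `w` are those of `u` and of `v`, together with an optional bar between
the two parts, which is allowed exactly when `v` is nonempty. Writing `a n` for the number of
parking quasi-ribbons of length `n`, this gives `a (m + 1) = a m + 2 ∑_{k < m} a k a (m - k)`,
that is `A = 1 + X (2 A² - A)` for `A = ∑ a n Xⁿ`. The series `1 + X S` satisfies the same
equation, and the equation has only one solution: the difference `D` of two solutions satisfies
`D = X U D`, so it is divisible by every power of `X`.
-/

namespace PowerSeries

theorem eq_zero_of_eq_X_mul_mul {R : Type*} [CommSemiring R] {D U : PowerSeries R}
    (h : D = X * U * D) : D = 0 := by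
  have hdvd (n : ℕ) : X ^ n ∣ D := by
    induction n with
    | zero => exact one_dvd D
    | succ n ih =>
      rw [h, pow_succ', mul_assoc]
      exact mul_dvd_mul_left X (dvd_mul_of_dvd_right ih U)
  ext n
  simpa using X_pow_dvd_iff.1 (hdvd (n + 1)) n n.lt_succ_self

theorem eq_of_schroeder_equation {R : Type*} [CommRing R] {F G : PowerSeries R}
    (hF : F = 1 + X * (2 * F ^ 2 - F)) (hG : G = 1 + X * (2 * G ^ 2 - G)) : F = G :=
  sub_eq_zero.1 (eq_zero_of_eq_X_mul_mul (U := 2 * (F + G) - 1) (by linear_combination hF - hG))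

end PowerSeries

theorem isNDPF_iff {w : List ℕ} :
    IsNDPF w ↔
      w.Pairwise (· ≤ ·) ∧ ∀ i < w.length, 1 ≤ w.getD i 0 ∧ w.getD i 0 ≤ i + 1 := by
  refine and_congr_right fun _ => forall_congr' fun i => ?_
  exact ⟨fun h hi => List.getD_eq_getElem w 0 hi ▸ h hi,
    fun h hi => List.getD_eq_getElem w 0 hi ▸ h hi⟩

namespace IsNDPF

variable {w : List ℕ}

theorem getD_bounds (hw : IsNDPF w) {i : ℕ} (hi : i < w.length) :
    1 ≤ w.getD i 0 ∧ w.getD i 0 ≤ i + 1 :=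
  (isNDPF_iff.1 hw).2 i hi

theorem mem_bounds (hw : IsNDPF w) {x : ℕ} (hx : x ∈ w) : 1 ≤ x ∧ x ≤ w.length := by
  obtain ⟨i, hi, rfl⟩ := List.mem_iff_getElem.1 hx
  have := hw.2 i hi
  omega

end IsNDPF

abbrev PQR (n : ℕ) : Type := {p : List ℕ × Finset ℕ // IsPQR n p}

namespace PQR

def arch (u v : List ℕ) : List ℕ := 1 :: (u ++ v.map (· + (u.length + 1)))

section Arch

variable {u v : List ℕ}

@[simp]
theorem length_arch : (arch u v).length = u.length + 1 + v.length := by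
  simp only [arch, List.length_cons, List.length_append, List.length_map]
  omega

theorem getD_arch_succ {s : ℕ} (hs : s < u.length) : (arch u v).getD (s + 1) 0 = u.getD s 0 := by
  simp only [arch, List.getD_cons_succ, List.getD_append _ _ _ _ hs]

theorem getD_arch_add {s : ℕ} (hs : s < v.length) :
    (arch u v).getD (u.length + 1 + s) 0 = v.getD s 0 + (u.length + 1) := by
  rw [show u.length + 1 + s = u.length + s + 1 by omega, arch, List.getD_cons_succ,
    List.getD_append_right _ _ _ _ (by omega), Nat.add_sub_cancel_left,
    List.getD_eq_getElem _ _ (by simpa), List.getD_eq_getElem _ _ hs, List.getElem_map]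

theorem _root_.IsNDPF.arch (hu : IsNDPF u) (hv : IsNDPF v) : IsNDPF (arch u v) := by
  refine isNDPF_iff.2 ⟨?_, fun i hi => ?_⟩
  · simp only [PQR.arch, List.pairwise_cons, List.pairwise_append, List.pairwise_map,
      List.mem_append, List.mem_map]
    refine ⟨?_, hu.1, hv.1.imp (by omega), ?_⟩
    · rintro a (ha | ⟨b, -, rfl⟩)
      · exact (hu.mem_bounds ha).1
      · omega
    · rintro a ha _ ⟨b, -, rfl⟩
      have := hu.mem_bounds ha
      omega
  · rw [length_arch] at hi
    rcases i with _ | s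
    · simp [PQR.arch]
    rcases lt_or_ge s u.length with hs | hs
    · rw [getD_arch_succ hs]
      have := hu.getD_bounds hs
      omega
    · obtain ⟨t, rfl⟩ := Nat.exists_eq_add_of_le hs
      rw [show u.length + t + 1 = u.length + 1 + t by omega, getD_arch_add (by omega)]
      have := hv.getD_bounds (i := t) (by omega)
      omega

/-- If `|u'| < |u|`, the entry at position `|u'| + 1` is at most `|u'| + 1` as an entry of `u`,
but at least `|u'| + 2` as the first entry of `v' + |u'| + 1`. -/
theorem length_le_of_arch_eq {u' v' : List ℕ} (hu : IsNDPF u) (hv' : IsNDPF v')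
    (h : arch u v = arch u' v') : u.length ≤ u'.length := by
  by_contra! hlt
  have hlen := congrArg List.length h
  simp only [length_arch] at hlen
  have hv'0 : 0 < v'.length := by omega
  have hu_le := (hu.getD_bounds hlt).2
  have hv'_ge := (hv'.getD_bounds hv'0).1
  rw [← getD_arch_succ (v := v) hlt, h, ← Nat.add_zero (u'.length + 1), getD_arch_add hv'0]
    at hu_le
  omega

theorem arch_inj {u' v' : List ℕ} (hu : IsNDPF u) (hv : IsNDPF v) (hu' : IsNDPF u')
    (hv' : IsNDPF v') (h : arch u v = arch u' v') : u = u' ∧ v = v' := by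
  have hlen : u.length = u'.length :=
    le_antisymm (length_le_of_arch_eq hu hv' h) (length_le_of_arch_eq hu' hv h.symm)
  rw [arch, arch, List.cons.injEq, hlen] at h
  obtain ⟨rfl, hv⟩ := List.append_inj h.2 hlen
  exact ⟨rfl, List.map_injective_iff.2 (add_left_injective _) hv⟩

end Arch

def joinBars (k : ℕ) (c : Bool) (Bu Bv : Finset ℕ) : Finset ℕ :=
  Bu.image (· + 1) ∪ (if c then {k} else ∅) ∪ Bv.image (· + (k + 1))

noncomputable def lowerBars (k : ℕ) (B : Finset ℕ) : Finset ℕ :=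
  (B.filter (· < k)).preimage (· + 1) (add_left_injective 1).injOn

noncomputable def upperBars (k : ℕ) (B : Finset ℕ) : Finset ℕ :=
  B.preimage (· + (k + 1)) (add_left_injective _).injOn

section Bars

variable {k : ℕ} {c : Bool} {Bu Bv : Finset ℕ}

@[simp]
theorem mem_joinBars {x : ℕ} :
    x ∈ joinBars k c Bu Bv ↔
      (∃ b ∈ Bu, b + 1 = x) ∨ (c = true ∧ x = k) ∨ ∃ b ∈ Bv, b + (k + 1) = x := by
  cases c <;> simp [joinBars, or_left_comm]

@[simp]
theorem mem_lowerBars {B : Finset ℕ} {b : ℕ} :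
    b ∈ lowerBars k B ↔ b + 1 ∈ B ∧ b + 1 < k := by
  simp [lowerBars]

@[simp]
theorem mem_upperBars {B : Finset ℕ} {b : ℕ} : b ∈ upperBars k B ↔ b + (k + 1) ∈ B := by
  simp [upperBars]

variable (hBu : ∀ b ∈ Bu, b + 1 < k)
include hBu

theorem lowerBars_joinBars : lowerBars k (joinBars k c Bu Bv) = Bu := by
  ext b
  have := hBu b
  simp only [mem_lowerBars, mem_joinBars]
  constructor
  · rintro ⟨⟨x, hx, hxb⟩ | ⟨-, hb⟩ | ⟨x, -, hxb⟩, hbk⟩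
    · rwa [← Nat.succ_injective hxb]
    all_goals omega
  · exact fun hb => ⟨.inl ⟨b, hb, rfl⟩, this hb⟩

theorem upperBars_joinBars : upperBars k (joinBars k c Bu Bv) = Bv := by
  ext b
  simp only [mem_upperBars, mem_joinBars]
  constructor
  · rintro (⟨x, hx, hxb⟩ | ⟨-, hb⟩ | ⟨x, hx, hxb⟩)
    · have := hBu x hx
      omega
    · omega
    · rwa [← add_left_injective _ hxb]
  · exact fun hb => .inr (.inr ⟨b, hb, rfl⟩)

theorem mem_joinBars_self : k ∈ joinBars k c Bu Bv ↔ c = true := by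
  rw [mem_joinBars]
  constructor
  · rintro (⟨x, hx, hxk⟩ | ⟨hc, -⟩ | ⟨x, -, hxk⟩)
    · have := hBu x hx
      omega
    · exact hc
    · omega
  · exact fun hc => .inr (.inl ⟨hc, rfl⟩)

end Bars

theorem joinBars_lowerBars_upperBars {k : ℕ} {B : Finset ℕ} (h0 : 0 < k → 0 ∉ B) :
    joinBars k (decide (k ∈ B)) (lowerBars k B) (upperBars k B) = B := by
  ext x
  simp only [mem_joinBars, mem_lowerBars, mem_upperBars, decide_eq_true_eq]
  constructor
  · rintro (⟨b, ⟨hb, -⟩, rfl⟩ | ⟨hx, rfl⟩ | ⟨b, hb, rfl⟩) <;> assumption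
  · intro hx
    rcases lt_trichotomy x k with hxk | rfl | hkx
    · obtain ⟨b, rfl⟩ : ∃ b, x = b + 1 :=
        Nat.exists_eq_succ_of_ne_zero fun h => h0 (by omega) (h ▸ hx)
      exact .inl ⟨b, ⟨hx, hxk⟩, rfl⟩
    · exact .inr (.inl ⟨hx, rfl⟩)
    · obtain ⟨b, rfl⟩ := Nat.exists_eq_add_of_lt hkx
      exact .inr (.inr ⟨b, by convert hx using 1; omega, by omega⟩)

def join (p q : List ℕ × Finset ℕ) (c : Bool) : List ℕ × Finset ℕ :=
  (arch p.1 q.1, joinBars p.1.length c p.2 q.2)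

theorem isPQR_zero_iff {p : List ℕ × Finset ℕ} : IsPQR 0 p ↔ p = ([], ∅) := by
  constructor
  · rintro ⟨-, hlen, hB⟩
    ext1
    · exact List.length_eq_zero_iff.1 hlen
    · exact Finset.eq_empty_of_forall_notMem fun b hb => by have := (hB b hb).1; omega
  · rintro rfl
    exact ⟨⟨.nil, nofun⟩, rfl, nofun⟩

section Join

variable {k l : ℕ} {p q : List ℕ × Finset ℕ} {c : Bool}

theorem isPQR_join (hp : IsPQR k p) (hq : IsPQR l q) (hc : c = true → 0 < l) :
    IsPQR (k + 1 + l) (join p q c) := by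
  obtain ⟨u, Bu⟩ := p
  obtain ⟨v, Bv⟩ := q
  obtain ⟨hu, rfl, hBu⟩ := hp
  obtain ⟨hv, rfl, hBv⟩ := hq
  dsimp only [join] at *
  have hw := hu.arch hv
  refine ⟨hw, length_arch, fun x hx => ?_⟩
  dsimp only
  rcases mem_joinBars.1 hx with (⟨b, hb, rfl⟩ | ⟨hc', rfl⟩ | ⟨b, hb, rfl⟩)
  · obtain ⟨hb1, hlt⟩ := hBu b hb
    refine ⟨by omega, ?_⟩
    rwa [getD_arch_succ (by omega), getD_arch_succ hb1]
  · have hv0 := hc hc'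
    have hle := (hw.getD_bounds (i := u.length) (by simp only [length_arch]; omega)).2
    have hnext : (arch u v).getD (u.length + 1) 0 = v.getD 0 0 + (u.length + 1) :=
      getD_arch_add hv0
    have hge := (hv.getD_bounds hv0).1
    omega
  · obtain ⟨hb1, hlt⟩ := hBv b hb
    refine ⟨by omega, ?_⟩
    rw [show b + (u.length + 1) = u.length + 1 + b by omega, getD_arch_add (by omega),
      show u.length + 1 + b + 1 = u.length + 1 + (b + 1) by omega, getD_arch_add hb1]
    omega

theorem join_inj {k' l' : ℕ} {p' q' : List ℕ × Finset ℕ} {c' : Bool} (hp : IsPQR k p)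
    (hq : IsPQR l q) (hp' : IsPQR k' p') (hq' : IsPQR l' q') (h : join p q c = join p' q' c') :
    p = p' ∧ c = c' ∧ q = q' := by
  obtain ⟨u, Bu⟩ := p
  obtain ⟨v, Bv⟩ := q
  obtain ⟨u', Bu'⟩ := p'
  obtain ⟨v', Bv'⟩ := q'
  obtain ⟨hw, hB⟩ := Prod.mk.inj h
  obtain ⟨rfl, rfl⟩ := arch_inj hp.1 hq.1 hp'.1 hq'.1 hw
  have hBu : ∀ b ∈ Bu, b + 1 < u.length := fun b hb => hp.2.1 ▸ (hp.2.2 b hb).1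
  have hBu' : ∀ b ∈ Bu', b + 1 < u.length := fun b hb => hp'.2.1 ▸ (hp'.2.2 b hb).1
  refine ⟨?_, ?_, ?_⟩
  · rw [← lowerBars_joinBars (c := c) (Bv := Bv) hBu, hB, lowerBars_joinBars hBu']
  · rw [Bool.eq_iff_iff, ← mem_joinBars_self (Bv := Bv) hBu, hB, mem_joinBars_self hBu']
  · rw [← upperBars_joinBars (c := c) (Bv := Bv) hBu, hB, upperBars_joinBars hBu']

end Join

section Split

variable {m k : ℕ} {w : List ℕ} {B : Finset ℕ}

theorem exists_first_return (h : IsPQR (m + 1) (1 :: w, B)) :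
    ∃ k ≤ m, (∀ s < k, w.getD s 0 ≤ s + 1) ∧ ∀ x ∈ w.drop k, k + 2 ≤ x := by
  obtain ⟨hw, hlen, -⟩ := h
  replace hlen : w.length = m := by simpa using hlen
  have hex : ∃ k, k = m ∨ w.getD k 0 = k + 2 := ⟨m, .inl rfl⟩
  set k := Nat.find hex
  have hkm : k ≤ m := Nat.find_min' hex (.inl rfl)
  refine ⟨k, hkm, fun s hs => ?_, fun x hx => ?_⟩
  · have := not_or.1 (Nat.find_min hex hs)
    have := (hw.getD_bounds (i := s + 1) (by simp; omega)).2
    simp only [List.getD_cons_succ] at this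
    omega
  · have hlt : k < w.length := by
      by_contra!
      simp [List.drop_eq_nil_of_le this] at hx
    have hret : w[k] = k + 2 := by
      rw [← List.getD_eq_getElem _ 0]
      exact (Nat.find_spec hex).resolve_left (by omega)
    have hsorted : (w.drop k).Pairwise (· ≤ ·) := hw.1.of_cons.sublist (List.drop_sublist _ _)
    rw [List.drop_eq_getElem_cons hlt] at hx hsorted
    rcases List.mem_cons.1 hx with rfl | hx
    · exact hret.ge
    · exact hret ▸ List.rel_of_pairwise_cons hsorted hx

theorem isPQR_take (h : IsPQR (m + 1) (1 :: w, B)) (hkm : k ≤ m)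
    (hlow : ∀ s < k, w.getD s 0 ≤ s + 1) : IsPQR k (w.take k, lowerBars k B) := by
  obtain ⟨hw, hlen, hB⟩ := h
  replace hlen : w.length = m := by simpa using hlen
  have hget (s : ℕ) (hs : s < k) : (w.take k).getD s 0 = w.getD s 0 := by
    simp [List.getD_eq_getElem?_getD, hs]
  refine ⟨isNDPF_iff.2 ⟨hw.1.of_cons.sublist (List.take_sublist _ _), fun s hs => ?_⟩,
    by simp; omega, fun b hb => ?_⟩
  · simp only [List.length_take] at hs
    have := (hw.getD_bounds (i := s + 1) (by simp; omega)).1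
    rw [List.getD_cons_succ] at this
    rw [hget s (by omega)]
    exact ⟨this, hlow s (by omega)⟩
  · obtain ⟨hbB, hbk⟩ := mem_lowerBars.1 hb
    have := (hB _ hbB).2
    simp only [List.getD_cons_succ] at this
    exact ⟨hbk, by rwa [hget b (by omega), hget (b + 1) hbk]⟩

theorem isPQR_drop (h : IsPQR (m + 1) (1 :: w, B)) (hkm : k ≤ m)
    (hhigh : ∀ x ∈ w.drop k, k + 2 ≤ x) :
    IsPQR (m - k) ((w.drop k).map (· - (k + 1)), upperBars k B) := by
  obtain ⟨hw, hlen, hB⟩ := h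
  replace hlen : w.length = m := by simpa using hlen
  have hget (s : ℕ) : ((w.drop k).map (· - (k + 1))).getD s 0 = w.getD (k + s) 0 - (k + 1) := by
    simp only [List.getD_eq_getElem?_getD, List.getElem?_map, List.getElem?_drop]
    cases w[k + s]? <;> simp
  have hhigh' (s : ℕ) (hs : k + s < m) : k + 2 ≤ w.getD (k + s) 0 := by
    refine hhigh _ ?_
    rw [List.getD_eq_getElem _ _ (by omega)]
    exact List.mem_iff_getElem.2 ⟨s, by simp; omega, List.getElem_drop⟩
  have hbound (s : ℕ) (hs : s < m) : w.getD s 0 ≤ s + 2 := by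
    have := (hw.getD_bounds (i := s + 1) (by simp; omega)).2
    rwa [List.getD_cons_succ] at this
  refine ⟨isNDPF_iff.2 ⟨?_, fun s hs => ?_⟩, by simp; omega, fun b hb => ?_⟩
  · exact (hw.1.of_cons.sublist (List.drop_sublist _ _)).map _
      fun _ _ hab => Nat.sub_le_sub_right hab _
  · simp only [List.length_map, List.length_drop] at hs
    rw [hget]
    have := hhigh' s (by omega)
    have := hbound (k + s) (by omega)
    omega
  · have := hB _ (mem_upperBars.1 hb)
    rw [show b + (k + 1) = k + b + 1 by omega, List.getD_cons_succ, List.getD_cons_succ] at this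
    rw [hget, hget, ← Nat.add_assoc]
    have := hhigh' b (by omega)
    omega

theorem join_take_drop (hkw : k ≤ w.length) (hhigh : ∀ x ∈ w.drop k, k + 2 ≤ x)
    (h0 : 0 < k → 0 ∉ B) :
    join (w.take k, lowerBars k B) ((w.drop k).map (· - (k + 1)), upperBars k B) (decide (k ∈ B))
      = (1 :: w, B) := by
  have hk : (w.take k).length = k := List.length_take_of_le hkw
  simp only [join, arch, hk, List.map_map, joinBars_lowerBars_upperBars h0, Prod.mk.injEq,
    List.cons.injEq, true_and, and_true]
  conv_rhs => rw [← List.take_append_drop k w]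
  congr 1
  refine (List.map_congr_left fun x hx => ?_).trans (List.map_id _)
  have := hhigh x hx
  simp only [Function.comp_apply, id]
  omega

end Split

theorem exists_join_eq {m : ℕ} {w : List ℕ} {B : Finset ℕ} (h : IsPQR (m + 1) (w, B)) :
    ∃ k l p q c, k + 1 + l = m + 1 ∧ IsPQR k p ∧ IsPQR l q ∧ (c = true → 0 < l) ∧
      join p q c = (w, B) := by
  obtain ⟨a, w, rfl⟩ := List.exists_cons_of_length_eq_add_one h.2.1
  obtain rfl : a = 1 := by
    have := h.1.getD_bounds (i := 0) (by simp)
    simp only [List.getD_cons_zero] at this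
    omega
  obtain ⟨k, hkm, hlow, hhigh⟩ := exists_first_return h
  have hlen : w.length = m := by simpa using h.2.1
  refine ⟨k, m - k, _, _, decide (k ∈ B), by omega, isPQR_take h hkm hlow,
    isPQR_drop h hkm hhigh, fun hc => ?_, join_take_drop (by omega) hhigh fun hk h0 => ?_⟩
  · have := (h.2.2 k (of_decide_eq_true hc)).1
    omega
  · have hbar := (h.2.2 0 h0).2
    rw [List.getD_cons_zero, zero_add, List.getD_cons_succ] at hbar
    have := hlow 0 hk
    omega

def arches (m : ℕ) : (Σ i : Fin m, PQR i × Bool × PQR (m - i)) ⊕ PQR m → PQR (m + 1)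
  | .inl ⟨i, p, c, q⟩ =>
    ⟨join p q c, by
      have h := isPQR_join (c := c) p.2 q.2 fun _ => Nat.sub_pos_of_lt i.2
      rwa [show i + 1 + (m - i) = m + 1 by omega] at h⟩
  | .inr p => ⟨join p ([], ∅) false, isPQR_join p.2 (isPQR_zero_iff.2 rfl) nofun⟩

theorem arches_injective (m : ℕ) : Function.Injective (arches m) := by
  rintro (⟨i, p, c, q⟩ | p) (⟨i', p', c', q'⟩ | p') h
  · obtain ⟨hp, rfl, hq⟩ := join_inj p.2 q.2 p'.2 q'.2 (Subtype.ext_iff.1 h)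
    obtain rfl : i = i' := Fin.ext (p.2.2.1.symm.trans (hp ▸ p'.2.2.1))
    rw [Subtype.ext hp, Subtype.ext hq]
  · obtain ⟨-, -, hq⟩ := join_inj p.2 q.2 p'.2 (isPQR_zero_iff.2 rfl) (Subtype.ext_iff.1 h)
    have := q.2.2.1
    rw [hq, List.length_nil] at this
    omega
  · obtain ⟨-, -, hq⟩ := join_inj p.2 (isPQR_zero_iff.2 rfl) p'.2 q'.2 (Subtype.ext_iff.1 h)
    have := q'.2.2.1
    rw [← hq, List.length_nil] at this
    omega
  · rw [Subtype.ext (join_inj p.2 (isPQR_zero_iff.2 rfl) p'.2 (isPQR_zero_iff.2 rfl)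
      (Subtype.ext_iff.1 h)).1]

theorem arches_surjective (m : ℕ) : Function.Surjective (arches m) := by
  rintro ⟨⟨w, B⟩, h⟩
  obtain ⟨k, l, p, q, c, hkl, hp, hq, hc, hjoin⟩ := exists_join_eq h
  rcases l with _ | l
  · obtain rfl := isPQR_zero_iff.1 hq
    obtain rfl : c = false := Bool.eq_false_iff.2 fun hc' => (hc hc').false
    obtain rfl : k = m := by omega
    exact ⟨.inr ⟨p, hp⟩, Subtype.ext hjoin⟩
  · refine ⟨.inl ⟨⟨k, by omega⟩, ⟨p, hp⟩, c, ⟨q, ?_⟩⟩, Subtype.ext hjoin⟩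
    rwa [show m - k = l + 1 by omega]

noncomputable def succEquiv (m : ℕ) :
    (Σ i : Fin m, PQR i × Bool × PQR (m - i)) ⊕ PQR m ≃ PQR (m + 1) :=
  Equiv.ofBijective (arches m) ⟨arches_injective m, arches_surjective m⟩

theorem card_zero : Nat.card (PQR 0) = 1 :=
  Nat.card_eq_one_iff_exists.2
    ⟨⟨_, isPQR_zero_iff.2 rfl⟩, fun p => Subtype.ext (isPQR_zero_iff.1 p.2)⟩

instance finite (n : ℕ) : Finite (PQR n) := by
  induction n using Nat.strong_induction_on with
  | _ n ih =>
    rcases n with _ | m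
    · exact Nat.finite_of_card_ne_zero (by rw [card_zero]; exact one_ne_zero)
    · have := ih m (by omega)
      have (i : Fin m) : Finite (PQR i × Bool × PQR (m - i)) := by
        have := ih i (by omega)
        have := ih (m - i) (by omega)
        infer_instance
      exact Finite.of_equiv _ (succEquiv m)

theorem card_succ (m : ℕ) : Nat.card (PQR (m + 1)) =
    ∑ i : Fin m, Nat.card (PQR i) * (2 * Nat.card (PQR (m - i))) + Nat.card (PQR m) := by
  simp [← Nat.card_congr (succEquiv m), Nat.card_sum, Nat.card_sigma, Nat.card_prod]

open Finset in
theorem card_succ_add_card (m : ℕ) : Nat.card (PQR (m + 1)) + Nat.card (PQR m) =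
    2 * ∑ ij ∈ antidiagonal m, Nat.card (PQR ij.1) * Nat.card (PQR ij.2) := by
  rw [card_succ, Finset.Nat.sum_antidiagonal_eq_sum_range_succ_mk, Finset.sum_range_succ,
    Fin.sum_univ_eq_sum_range (fun i => Nat.card (PQR i) * (2 * Nat.card (PQR (m - i))))]
  simp only [Nat.sub_self, card_zero, mul_add, mul_sum, mul_left_comm _ 2]
  ring

open PowerSeries

noncomputable def genFun : PowerSeries ℚ := mk fun n => (Nat.card (PQR n) : ℚ)

theorem genFun_eq : genFun = 1 + X * (2 * genFun ^ 2 - genFun) := by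
  ext (_ | m)
  · simp [genFun, card_zero]
  · have := congrArg (Nat.cast : ℕ → ℚ) (card_succ_add_card m)
    push_cast at this
    rw [map_add, coeff_one, if_neg m.succ_ne_zero, coeff_succ_X_mul, map_sub,
      show (2 : PowerSeries ℚ) = C (2 : ℚ) from rfl, coeff_C_mul, pow_two, coeff_mul]
    simp only [genFun, coeff_mk]
    linarith

theorem card_one_two_three :
    Nat.card (PQR 1) = 1 ∧ Nat.card (PQR 2) = 3 ∧ Nat.card (PQR 3) = 11 := by
  have h1 := card_succ_add_card 0
  have h2 := card_succ_add_card 1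
  have h3 := card_succ_add_card 2
  simp only [Finset.Nat.sum_antidiagonal_succ, Finset.HasAntidiagonal.antidiagonal_zero,
    Finset.sum_singleton, card_zero, zero_add, mul_one, one_mul, Nat.reduceEqDiff, Nat.reduceAdd]
    at h1 h2 h3
  rw [h1] at h2 h3
  omega

end PQR

/-- The number of parking quasi-ribbons of length `n` is the little Schröder
number `sₙ`, the `n`-th coefficient of the series `1 + xS(x)` where
`S = 1 + 3xS + 2x²S²`; in particular there are `1, 3, 11` parking quasi-ribbons
of lengths `1, 2, 3`. -/
theorem pqr_card_eq_little_schroeder (S : PowerSeries ℚ)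
    (heq : S = 1 + 3 * PowerSeries.X * S + 2 * PowerSeries.X ^ 2 * S ^ 2) (n : ℕ) :
    (Nat.card {p : List ℕ × Finset ℕ // IsPQR n p} : ℚ) =
      PowerSeries.coeff n (1 + PowerSeries.X * S) ∧
    Nat.card {p : List ℕ × Finset ℕ // IsPQR 1 p} = 1 ∧
    Nat.card {p : List ℕ × Finset ℕ // IsPQR 2 p} = 3 ∧
    Nat.card {p : List ℕ × Finset ℕ // IsPQR 3 p} = 11 := by
  have hS : 1 + PowerSeries.X * S =
      1 + PowerSeries.X * (2 * (1 + PowerSeries.X * S) ^ 2 - (1 + PowerSeries.X * S)) := by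
    linear_combination PowerSeries.X * heq
  refine ⟨?_, PQR.card_one_two_three⟩
  rw [← PowerSeries.eq_of_schroeder_equation PQR.genFun_eq hS, PQR.genFun,
    PowerSeries.coeff_mk]
end

section
/- For n ≥ 1 let Pₙ(α) = α·∏_{k=1}^{n−1}((n+1)α + k). Then Pₙ(α)/n! = (1/(n+1))·binomial((n+1)α + n − 1, n), and the coefficient of αᵏ in Pₙ(α) equals the number of pairs (a, σ) where a is a parking function of length n and σ is a permutation of {1,...,n} with exactly k cycles such that a∘σ = a (σ stabilizes the word a). -/
open Polynomial

/-- `Pₙ(α) = α·∏_{k=1}^{n−1}((n+1)α + k)`. -/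
noncomputable def Ppoly (n : ℕ) : Polynomial ℚ :=
  Polynomial.X *
    ∏ k ∈ Finset.Icc 1 (n - 1),
      (Polynomial.C ((n : ℚ) + 1) * Polynomial.X + Polynomial.C (k : ℚ))

/-!
Burnside's lemma for `Sₙ` acting on words of length `n` over `q` letters gives
`∑_σ q ^ cyc σ = q (q + 1) ⋯ (q + n - 1)`: a permutation fixes the `q ^ cyc σ` words that are
constant on its cycles, and the orbits are the `multichoose q n` multisets of letters. Hence
`(n + 1) Pₙ(α) = ∏_{j < n} ((n + 1) α + j) = ∑_σ (n + 1) ^ cyc σ α ^ cyc σ`.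

On the other side, Pollak's circle argument: a word `b` over `ℤ/(n+1)` becomes a parking function
after subtracting exactly one constant `r`, namely the first minimum of the walk "cars minus spots"
around the circle. The shift commutes with permuting positions, so `n + 1` times the number of
`σ`-invariant parking functions is the number `(n + 1) ^ cyc σ` of `σ`-invariant words.
-/

open Finset Equiv Equiv.Perm

theorem exists_perm_comp_eq_of_card_fiber_eq {α β : Type*} [Fintype α] [DecidableEq β]
    {f g : α → β} (h : ∀ t, #{x | f x = t} = #{x | g x = t}) : ∃ σ : Perm α, g ∘ σ = f :=
  ⟨Equiv.ofFiberEquiv fun t => Fintype.equivOfCardEq <| by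
    simp only [Fintype.card_subtype, h], funext (Equiv.ofFiberEquiv_map _)⟩

section NumCycles

variable {α : Type*} [Fintype α] [DecidableEq α]

def numCycles (σ : Perm α) : ℕ := σ.cycleType.card + (Fintype.card α - #σ.support)

noncomputable def quotientSameCycleEquiv (σ : Perm α) :
    Quotient (SameCycle.setoid σ) ≃ {c // c ∈ σ.cycleFactorsFinset} ⊕ Function.fixedPoints σ := by
  classical
  refine Equiv.ofBijective (Quotient.lift (fun x =>
    if h : σ x = x then Sum.inr ⟨x, h⟩
    else Sum.inl ⟨σ.cycleOf x, cycleOf_mem_cycleFactorsFinset_iff.2 (mem_support.2 h)⟩) ?_)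
    ⟨?_, ?_⟩
  · intro x y (hxy : σ.SameCycle x y)
    by_cases hx : σ x = x
    · obtain rfl := hxy.eq_of_left hx
      rfl
    · have hy : σ y ≠ y := mt hxy.apply_eq_self_iff.2 hx
      simp only [dif_neg hx, dif_neg hy, hxy.cycleOf_eq]
  · refine Quotient.ind₂ fun x y h => Quotient.sound (show σ.SameCycle x y from ?_)
    by_cases hx : σ x = x <;> by_cases hy : σ y = y <;>
      simp only [Quotient.lift_mk, hx, hy, reduceDIte, reduceCtorEq, Sum.inl.injEq,
        Sum.inr.injEq, Subtype.mk.injEq] at h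
    · obtain rfl : x = y := congrArg Subtype.val h
      exact SameCycle.refl σ x
    · exact (sameCycle_iff_cycleOf_eq_of_mem_support (mem_support.2 hx)
        (mem_support.2 hy)).2 h
  · rintro (⟨c, hc⟩ | ⟨x, hx⟩)
    · obtain ⟨x, hx⟩ := (mem_cycleFactorsFinset_iff.1 hc).1.nonempty_support
      have hcx : c = σ.cycleOf x := cycle_is_cycleOf hx hc
      have hσx : σ x ≠ x := mem_support.1 (mem_support_cycleOf_iff.1 (hcx ▸ hx)).2
      exact ⟨Quotient.mk _ x, by simp [hσx, hcx]⟩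
    · exact ⟨Quotient.mk _ x, by simp [show σ x = x from hx]⟩

theorem card_quotient_sameCycle (σ : Perm α) :
    Nat.card (Quotient (SameCycle.setoid σ)) = numCycles σ := by
  rw [Nat.card_congr (quotientSameCycleEquiv σ), Nat.card_sum, Nat.card_eq_fintype_card,
    Fintype.card_coe, Nat.card_eq_fintype_card, card_fixedPoints, sum_cycleType, numCycles,
    cycleType_def, Multiset.card_map]
  rfl

def invariantFunEquiv (σ : Perm α) (β : Type*) :
    {f : α → β // f ∘ σ = f} ≃ (Quotient (SameCycle.setoid σ) → β) where
  toFun f := Quotient.lift f.1 fun x y (hxy : σ.SameCycle x y) => by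
    obtain ⟨i, rfl⟩ := hxy.exists_nat_pow_eq
    clear hxy
    induction i with
    | zero => rfl
    | succ i ih => rw [ih, pow_succ', mul_apply]; exact (congrFun f.2 _).symm
  invFun g := ⟨g ∘ Quotient.mk _, funext fun x =>
    congrArg g (Quotient.sound (show σ.SameCycle (σ x) x from sameCycle_apply_left.2 .rfl))⟩
  left_inv _ := rfl
  right_inv g := funext fun q => by induction q using Quotient.ind; rfl

theorem card_fun_comp_perm_eq_self (σ : Perm α) (β : Type*) [Fintype β] :
    Nat.card {f : α → β // f ∘ σ = f} = Fintype.card β ^ numCycles σ := by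
  rw [Nat.card_congr (invariantFunEquiv σ β), Nat.card_fun, card_quotient_sameCycle,
    Nat.card_eq_fintype_card]

section Burnside

attribute [local instance] arrowAction

omit [Fintype α] [DecidableEq α] in
theorem mem_fixedBy_iff_comp_eq_self {β : Type*} (σ : Perm α) (f : α → β) :
    f ∈ MulAction.fixedBy (α → β) σ ↔ f ∘ σ = f := by
  have key : ∀ τ : Perm α, f ∘ τ = f → f ∘ ⇑τ⁻¹ = f := fun τ h => by
    conv_lhs => rw [← h]
    ext; simp
  exact ⟨fun h => inv_inv σ ▸ key σ⁻¹ h, key σ⟩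

noncomputable def orbitQuotientEquivSym (β : Type*) [DecidableEq β] :
    MulAction.orbitRel.Quotient (Perm α) (α → β) ≃ Sym β (Fintype.card α) := by
  refine Equiv.ofBijective (Quotient.lift (fun f => ⟨univ.val.map f, by simp⟩) ?_) ⟨?_, ?_⟩
  · rintro f g ⟨σ, rfl⟩
    refine Subtype.ext ?_
    show univ.val.map (g ∘ ⇑σ⁻¹) = univ.val.map g
    rw [← Multiset.map_map, Multiset.map_univ_val_equiv]
  · refine Quotient.ind₂ fun f g h => Quotient.sound ?_
    have hcount (t : β) : #{x | f x = t} = #{x | g x = t} := by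
      have h' : univ.val.map f = univ.val.map g := congrArg Subtype.val h
      have := congrArg (Multiset.count t) h'
      rw [Multiset.count_map, Multiset.count_map] at this
      show Multiset.card (univ.val.filter _) = Multiset.card (univ.val.filter _)
      convert this using 2 <;> exact Multiset.filter_congr fun _ _ => eq_comm
    obtain ⟨σ, hσ⟩ := exists_perm_comp_eq_of_card_fiber_eq hcount
    refine ⟨σ⁻¹, funext fun x => ?_⟩
    rw [← hσ]
    show g (σ⁻¹⁻¹ x) = g (σ x)
    rw [inv_inv]
  · rintro ⟨m, hm⟩
    induction m using Quotient.inductionOn with | h l => ?_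
    have hl : l.length = Fintype.card α := hm
    let e := Fintype.equivFin α
    refine ⟨Quotient.mk _ fun x => l[e x]'((e x).2.trans_eq hl.symm), Subtype.ext ?_⟩
    show univ.val.map ((fun i : Fin _ => l[i]'(i.2.trans_eq hl.symm)) ∘ e) = (l : Multiset β)
    rw [← Multiset.map_map, Multiset.map_univ_val_equiv, Fin.univ_val_map]
    exact congrArg _ (List.ext_getElem (by simp [hl]) (by simp))

theorem sum_pow_numCycles (q : ℕ) :
    ∑ σ : Perm α, q ^ numCycles σ = q.ascFactorial (Fintype.card α) := by
  classical
  calc ∑ σ : Perm α, q ^ numCycles σ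
      = ∑ σ : Perm α, Fintype.card (MulAction.fixedBy (α → Fin q) σ) := by
        refine sum_congr rfl fun σ _ => ?_
        rw [← Nat.card_eq_fintype_card, Nat.card_congr
          (Equiv.subtypeEquivRight (mem_fixedBy_iff_comp_eq_self σ)), card_fun_comp_perm_eq_self,
          Fintype.card_fin]
    _ = q.multichoose (Fintype.card α) * (Fintype.card α).factorial := by
        rw [MulAction.sum_card_fixedBy_eq_card_orbits_mul_card_group,
          Fintype.card_congr (orbitQuotientEquivSym _), Sym.card_sym_eq_multichoose,
          Fintype.card_fin, Fintype.card_perm]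
    _ = q.ascFactorial (Fintype.card α) := by
        rw [Nat.multichoose_eq, Nat.ascFactorial_eq_factorial_mul_choose', mul_comm]

end Burnside

theorem sum_X_pow_numCycles (R : Type*) [CommRing R] [IsDomain R] [CharZero R] :
    ∑ σ : Perm α, (X : R[X]) ^ numCycles σ = ∏ j ∈ range (Fintype.card α), (X + C (j : R)) := by
  refine eq_of_infinite_eval_eq _ _
    (Set.infinite_of_injective_forall_mem Nat.cast_injective fun q : ℕ => ?_)
  simp only [Set.mem_ofPred_eq, eval_finsetSum, eval_pow, eval_X, eval_prod, eval_add, eval_C]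
  exact_mod_cast congrArg (Nat.cast : ℕ → R)
    ((sum_pow_numCycles q).trans (Nat.ascFactorial_eq_prod_range _ _))

end NumCycles

theorem coeff_prod_C_mul_X_add_C {R : Type*} [CommRing R] [IsDomain R] [CharZero R]
    (c : R) (n k : ℕ) :
    (∏ j ∈ range n, (C c * X + C (j : R))).coeff k =
      c ^ k * #{σ : Perm (Fin n) | numCycles σ = k} := by
  have hcomp : ∏ j ∈ range n, (C c * X + C (j : R)) =
      ∑ σ : Perm (Fin n), C (c ^ numCycles σ) * X ^ numCycles σ := by
    have h := congrArg (fun p => p.comp (C c * X)) (sum_X_pow_numCycles (α := Fin n) R)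
    simpa only [Fintype.card_fin, Polynomial.sum_comp, Polynomial.prod_comp, pow_comp,
      add_comp, X_comp, C_comp, mul_pow, C_pow] using h.symm
  rw [hcomp, finsetSum_coeff, card_filter, Nat.cast_sum, mul_sum]
  refine sum_congr rfl fun σ _ => ?_
  rw [coeff_C_mul_X_pow]
  by_cases h : numCycles σ = k
  · simp [h]
  · simp [h, Ne.symm h]

theorem existsUnique_window_min {n : ℕ} (G : ℕ → ℤ) (hG : ∀ k, G (k + (n + 1)) = G k - 1) :
    ∃! r, r < n + 1 ∧ ∀ m < n, G r ≤ G (r + (m + 1)) := by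
  have no_two : ∀ r₁ r₂, r₁ < r₂ → r₂ < n + 1 → (∀ m < n, G r₁ ≤ G (r₁ + (m + 1))) →
      (∀ m < n, G r₂ ≤ G (r₂ + (m + 1))) → False := by
    intro r₁ r₂ h₁₂ h₂ good₁ good₂
    -- `G r₁ ≤ G r₂ ≤ G (r₁ + (n + 1)) = G r₁ - 1`
    have h₁ := good₁ (r₂ - r₁ - 1) (by omega)
    have h₂ := good₂ (r₁ + n - r₂) (by omega)
    rw [show r₁ + (r₂ - r₁ - 1 + 1) = r₂ by omega] at h₁
    rw [show r₂ + (r₁ + n - r₂ + 1) = r₁ + (n + 1) by omega, hG] at h₂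
    omega
  have hex : ∃ r, r < n + 1 ∧ ∀ j < n + 1, G r ≤ G j := by
    obtain ⟨r, hr, hmin⟩ := exists_min_image (range (n + 1)) G nonempty_range_add_one
    exact ⟨r, mem_range.1 hr, fun j hj => hmin j (mem_range.2 hj)⟩
  obtain ⟨hr, hmin⟩ := Nat.find_spec hex
  -- The first minimiser `r₀` of `G` on `[0, n]` is good: a window position past `n` is
  -- `j + (n + 1)` with `j < r₀`, where `G` is one less than `G j > G r₀`.
  have hlt : ∀ j < Nat.find hex, G (Nat.find hex) < G j := fun j hj =>
    lt_of_le_of_ne (hmin j (by omega)) fun h =>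
      Nat.find_min hex hj ⟨by omega, fun i hi => h ▸ hmin i hi⟩
  have good : ∀ m < n, G (Nat.find hex) ≤ G (Nat.find hex + (m + 1)) := by
    intro m hm
    by_cases hj : Nat.find hex + (m + 1) < n + 1
    · exact hmin _ hj
    · obtain ⟨j, hj'⟩ : ∃ j, Nat.find hex + (m + 1) = j + (n + 1) :=
        ⟨Nat.find hex + (m + 1) - (n + 1), by omega⟩
      have := hlt j (by omega)
      rw [hj', hG]
      omega
  refine ⟨Nat.find hex, ⟨hr, good⟩, fun r ⟨hr', good'⟩ => ?_⟩
  rcases lt_trichotomy r (Nat.find hex) with h | h | h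
  · exact (no_two _ _ h hr good' good).elim
  · exact h
  · exact (no_two _ _ h hr' good good').elim

section Parking

variable {n : ℕ}

def IsParkingFunction (a : Fin n → Fin n) : Prop :=
  ∀ m : Fin n, (m : ℕ) + 1 ≤ #{i | a i ≤ m}

def IsParkingMod (b : Fin n → ZMod (n + 1)) : Prop :=
  ∀ m < n, m + 1 ≤ #{i | (b i).val ≤ m}

theorem IsParkingMod.val_lt {b : Fin n → ZMod (n + 1)} (hb : IsParkingMod b) (i : Fin n) :
    (b i).val < n := by
  have := i.2
  by_contra hi
  have hlt := card_lt_card (filter_ssubset.2 ⟨i, mem_univ i, by omega⟩ :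
    ({j | (b j).val ≤ n - 1} : Finset (Fin n)) ⊂ univ)
  have := hb (n - 1) (by omega)
  rw [card_univ, Fintype.card_fin] at hlt
  omega

theorem val_natCast_fin (k : Fin n) : ((k : ℕ) : ZMod (n + 1)).val = k :=
  ZMod.val_cast_of_lt (by omega)

theorem natCast_fin_inj {k l : Fin n} :
    ((k : ℕ) : ZMod (n + 1)) = ((l : ℕ) : ZMod (n + 1)) ↔ k = l :=
  ⟨fun h => Fin.ext <| by simpa only [val_natCast_fin] using congrArg ZMod.val h,
    by rintro rfl; rfl⟩

theorem isParkingMod_natCast_iff (a : Fin n → Fin n) :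
    IsParkingMod (fun i => ((a i : ℕ) : ZMod (n + 1))) ↔ IsParkingFunction a := by
  simp only [IsParkingMod, IsParkingFunction, val_natCast_fin, Fin.le_def]
  exact ⟨fun h m => h m m.2, fun h m hm => h ⟨m, hm⟩⟩

/-- Cars minus spots among the spots `0, …, k - 1` (taken mod `n + 1`), car `i` preferring
spot `b i`. -/
def surplus (b : Fin n → ZMod (n + 1)) (k : ℕ) : ℤ :=
  ∑ j ∈ range k, (#{i | b i = j} : ℤ) - k

theorem card_sub_val_lt (b : Fin n → ZMod (n + 1)) (r : ZMod (n + 1)) {m : ℕ} (hm : m ≤ n + 1) :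
    #{i | (b i - r).val < m} = ∑ u ∈ range m, #{i | b i = r + u} := by
  rw [card_eq_sum_card_fiberwise (f := fun i => (b i - r).val) (t := range m)
    fun i hi => by simpa using hi]
  refine sum_congr rfl fun u hu => ?_
  rw [filter_filter]
  refine congrArg card (filter_congr fun i _ => ?_)
  have hu : u < m := mem_range.1 hu
  constructor
  · rintro ⟨-, h⟩
    rw [← h, ZMod.natCast_zmod_val, add_sub_cancel]
  · rintro h
    rw [h, add_sub_cancel_left, ZMod.val_cast_of_lt (by omega)]
    exact ⟨hu, rfl⟩

theorem surplus_add_sub (b : Fin n → ZMod (n + 1)) (k : ℕ) {m : ℕ} (hm : m ≤ n + 1) :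
    surplus b (k + m) - surplus b k = #{i | (b i - k).val < m} - m := by
  rw [card_sub_val_lt b k hm, surplus, surplus, sum_range_add]
  push_cast
  ring

theorem surplus_add_period (b : Fin n → ZMod (n + 1)) (k : ℕ) :
    surplus b (k + (n + 1)) = surplus b k - 1 := by
  have h := surplus_add_sub b k le_rfl
  rw [filter_true_of_mem fun i _ => ZMod.val_lt _, card_univ, Fintype.card_fin] at h
  push_cast at h
  omega

theorem isParkingMod_sub_iff (b : Fin n → ZMod (n + 1)) (r : ZMod (n + 1)) :
    IsParkingMod (fun i => b i - r) ↔ ∀ m < n, surplus b r.val ≤ surplus b (r.val + (m + 1)) := by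
  refine forall₂_congr fun m hm => ?_
  beta_reduce
  have h := surplus_add_sub b r.val (m := m + 1) (by omega)
  simp only [ZMod.natCast_zmod_val, Nat.lt_succ_iff] at h
  omega

theorem existsUnique_isParkingMod_sub (b : Fin n → ZMod (n + 1)) :
    ∃! r : ZMod (n + 1), IsParkingMod (fun i => b i - r) := by
  obtain ⟨r, ⟨hr, good⟩, huniq⟩ := existsUnique_window_min (surplus b) (surplus_add_period b)
  refine ⟨r, (isParkingMod_sub_iff b r).2 ?_, fun r' h' => ?_⟩
  · rwa [ZMod.val_cast_of_lt hr]
  · rw [← huniq r'.val ⟨r'.val_lt, (isParkingMod_sub_iff b r').1 h'⟩, ZMod.natCast_zmod_val]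

noncomputable def parkingShiftEquiv (n : ℕ) :
    {a : Fin n → Fin n // IsParkingFunction a} × ZMod (n + 1) ≃ (Fin n → ZMod (n + 1)) := by
  refine Equiv.ofBijective (fun p i => ((p.1.1 i : ℕ) : ZMod (n + 1)) + p.2) ⟨?_, fun b => ?_⟩
  · rintro ⟨⟨a₁, h₁⟩, t₁⟩ ⟨⟨a₂, h₂⟩, t₂⟩ h
    have hb (t : ZMod (n + 1)) (a : Fin n → Fin n) (ha : IsParkingFunction a) :
        IsParkingMod fun i => ((a i : ℕ) : ZMod (n + 1)) + t - t := by
      simpa only [add_sub_cancel_right] using (isParkingMod_natCast_iff a).2 ha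
    have h' (i : Fin n) : ((a₁ i : ℕ) : ZMod (n + 1)) + t₁ = ((a₂ i : ℕ) : ZMod (n + 1)) + t₂ :=
      congrFun h i
    obtain rfl : t₁ = t₂ := (existsUnique_isParkingMod_sub _).unique (hb t₁ a₁ h₁)
      (by simpa only [h'] using hb t₂ a₂ h₂)
    obtain rfl : a₁ = a₂ := funext fun i => natCast_fin_inj.1 (add_right_cancel (h' i))
    rfl
  · obtain ⟨r, hr, -⟩ := existsUnique_isParkingMod_sub b
    let a : Fin n → Fin n := fun i => ⟨(b i - r).val, hr.val_lt i⟩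
    have ha : (fun i => ((a i : ℕ) : ZMod (n + 1))) = fun i => b i - r :=
      funext fun i => ZMod.natCast_zmod_val (b i - r)
    refine ⟨(⟨a, (isParkingMod_natCast_iff a).1 (ha ▸ hr)⟩, r), funext fun i => ?_⟩
    simp only [congrFun ha i, sub_add_cancel]

theorem parkingShiftEquiv_apply (p : {a : Fin n → Fin n // IsParkingFunction a} × ZMod (n + 1))
    (i : Fin n) : parkingShiftEquiv n p i = ((p.1.1 i : ℕ) : ZMod (n + 1)) + p.2 :=
  rfl

theorem parkingShiftEquiv_comp_perm_eq_self_iff (σ : Perm (Fin n))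
    (p : {a : Fin n → Fin n // IsParkingFunction a} × ZMod (n + 1)) :
    parkingShiftEquiv n p ∘ σ = parkingShiftEquiv n p ↔ p.1.1 ∘ σ = p.1.1 := by
  simp only [funext_iff, Function.comp_apply, parkingShiftEquiv_apply, add_left_inj,
    natCast_fin_inj]

theorem card_isParkingFunction_comp_eq_self_mul (σ : Perm (Fin n)) :
    Nat.card {a : Fin n → Fin n // IsParkingFunction a ∧ a ∘ σ = a} * (n + 1) =
      (n + 1) ^ numCycles σ :=
  calc Nat.card {a : Fin n → Fin n // IsParkingFunction a ∧ a ∘ σ = a} * (n + 1)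
      = Nat.card {p : {a : Fin n → Fin n // IsParkingFunction a} × ZMod (n + 1) //
          p.1.1 ∘ σ = p.1.1} := by
        rw [Nat.card_congr (Equiv.prodSubtypeFstEquivSubtypeProd (β := ZMod (n + 1))
          (p := fun a : {a // IsParkingFunction a} => a.1 ∘ σ = a.1)), Nat.card_prod,
          Nat.card_zmod,
          ← Nat.card_congr (subtypeSubtypeEquivSubtypeInter IsParkingFunction fun a => a ∘ σ = a)]
    _ = Nat.card {b : Fin n → ZMod (n + 1) // b ∘ σ = b} :=
        Nat.card_congr <| (parkingShiftEquiv n).subtypeEquiv fun p =>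
          (parkingShiftEquiv_comp_perm_eq_self_iff σ p).symm
    _ = (n + 1) ^ numCycles σ := by rw [card_fun_comp_perm_eq_self, ZMod.card]

theorem card_parkingStabilizerPairs_mul (n k : ℕ) :
    Nat.card {aσ : (Fin n → Fin n) × Perm (Fin n) //
        IsParkingFunction aσ.1 ∧ aσ.1 ∘ aσ.2 = aσ.1 ∧ numCycles aσ.2 = k} * (n + 1) =
      (n + 1) ^ k * #{σ : Perm (Fin n) | numCycles σ = k} := by
  let e : {aσ : (Fin n → Fin n) × Perm (Fin n) //
        IsParkingFunction aσ.1 ∧ aσ.1 ∘ aσ.2 = aσ.1 ∧ numCycles aσ.2 = k} ≃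
      Σ σ : {σ : Perm (Fin n) // numCycles σ = k},
        {a : Fin n → Fin n // IsParkingFunction a ∧ a ∘ σ.1 = a} :=
    { toFun p := ⟨⟨p.1.2, p.2.2.2⟩, p.1.1, p.2.1, p.2.2.1⟩
      invFun q := ⟨(q.2.1, q.1.1), q.2.2.1, q.2.2.2, q.1.2⟩
      left_inv _ := rfl
      right_inv _ := rfl }
  rw [Nat.card_congr e, Nat.card_sigma, sum_mul, Fintype.sum_congr _ (fun _ => (n + 1) ^ k)
    fun σ => by rw [card_isParkingFunction_comp_eq_self_mul, σ.2], sum_const, card_univ,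
    Fintype.card_subtype, smul_eq_mul, mul_comm]

end Parking

theorem C_mul_Ppoly_eq_prod {n : ℕ} (hn : 1 ≤ n) :
    C ((n : ℚ) + 1) * Ppoly n = ∏ j ∈ range n, (C ((n : ℚ) + 1) * X + C (j : ℚ)) := by
  obtain ⟨m, rfl⟩ := Nat.exists_eq_add_of_le' hn
  rw [prod_range_succ', Ppoly, Nat.add_sub_cancel, ← Ico_add_one_right_eq_Icc, range_eq_Ico,
    prod_Ico_add' (fun k : ℕ => C ((↑(m + 1) : ℚ) + 1) * X + C (k : ℚ)), zero_add, Nat.cast_zero,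
    C_0, add_zero]
  ring

/-- `Pₙ(α)/n! = (1/(n+1))·binom((n+1)α+n−1, n)` (in the equivalent cleared form
`(n+1)·Pₙ(α) = ∏_{j=0}^{n−1}((n+1)α + j)`, since
`binom(x+n−1,n) = (1/n!)∏_{j=0}^{n-1}(x+j)`), and the coefficient of `αᵏ` in
`Pₙ(α)` is the number of pairs `(a, σ)` of a parking function `a` of length `n`
and a permutation `σ` of `{1,…,n}` with `k` cycles such that `a∘σ = a`. -/
theorem parking_stabilizer_polynomial (n : ℕ) (hn : 1 ≤ n) :
    Polynomial.C ((n : ℚ) + 1) * Ppoly n =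
      ∏ j ∈ Finset.range n,
        (Polynomial.C ((n : ℚ) + 1) * Polynomial.X + Polynomial.C (j : ℚ)) ∧
    ∀ k : ℕ, (Ppoly n).coeff k =
      (Nat.card {aσ : (Fin n → Fin n) × Equiv.Perm (Fin n) //
        (∀ m : Fin n,
          (m : ℕ) + 1 ≤ (Finset.univ.filter (fun i => aσ.1 i ≤ m)).card) ∧
        aσ.1 ∘ aσ.2 = aσ.1 ∧
        aσ.2.cycleType.card + (n - aσ.2.support.card) = k} : ℚ) := by
  have hprod := C_mul_Ppoly_eq_prod hn
  refine ⟨hprod, fun k => mul_left_cancel₀ (by positivity : (n : ℚ) + 1 ≠ 0) ?_⟩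
  rw [← coeff_C_mul, hprod, coeff_prod_C_mul_X_add_C]
  have hpairs := card_parkingStabilizerPairs_mul n k
  simp only [IsParkingFunction, numCycles, Fintype.card_fin] at hpairs ⊢
  exact_mod_cast hpairs.symm.trans (mul_comm _ _)
end
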